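/- arXiv:2402.05848 — 8 statements merged into one kernel-verified Lean document; each statement's English description precedes it below -/
import Mathlib

section
/- For every prime power q ≥ 5, the graph Γ of q-ary simplex codes of dimension 2 contains a top, i.e., there exists a maximal clique of Γ consisting of all simplex lines contained in some fixed 3-dimensional subspace of V. -/
open Submodule Module

/-- All columns of the 2×n matrix with rows `x` and `y` are nonzero and pairwise
non-proportional (equivalently, every 2×2 minor is nonzero). -/
def GoodPair {F : Type} [Field F] {n : ℕ} (x y : Fin n → F) : Prop :=
  ∀ i j : Fin n, i ≠ j → x i * y j ≠ x j * y i

/-- A simplex line: a 2-dimensional subspace spanned by the rows of a generator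
matrix all of whose columns are nonzero and pairwise non-proportional. -/
def IsSimplexLine {F : Type} [Field F] {n : ℕ} (C : Submodule F (Fin n → F)) : Prop :=
  ∃ x y : Fin n → F, GoodPair x y ∧ C = span F {x, y}

/-- A simplex point: a 1-dimensional subspace spanned by a vector with exactly
one zero coordinate. -/
def IsSimplexPoint {F : Type} [Field F] {n : ℕ} (P : Submodule F (Fin n → F)) : Prop :=
  ∃ x : Fin n → F, (∃! i, x i = 0) ∧ P = span F {x}

/-- Two simplex points are collinear: they are spanned by the two rows of a
generator matrix of a simplex code, i.e. there is a simplex line containing both. -/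
def PtCollinear {F : Type} [Field F] {n : ℕ} (P Q : Submodule F (Fin n → F)) : Prop :=
  ∃ x y : Fin n → F, GoodPair x y ∧ P = span F {x} ∧ Q = span F {y}

/-- A clique of the graph Γ of simplex lines: all members are simplex lines and
any two distinct members intersect in a 1-dimensional subspace. -/
def IsGammaClique {F : Type} [Field F] {n : ℕ} (T : Set (Submodule F (Fin n → F))) : Prop :=
  (∀ L ∈ T, IsSimplexLine L) ∧
    ∀ L ∈ T, ∀ L' ∈ T, L ≠ L' → finrank F ↥(L ⊓ L') = 1

/-- A top of Γ: a maximal clique of Γ consisting of all simplex lines contained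
in a fixed 3-dimensional subspace (projective plane). -/
def IsGammaTop {F : Type} [Field F] {n : ℕ} (T : Set (Submodule F (Fin n → F))) : Prop :=
  IsGammaClique T ∧ (∀ T' : Set (Submodule F (Fin n → F)), IsGammaClique T' → T ⊆ T' → T' = T) ∧
    ∃ W : Submodule F (Fin n → F), finrank F ↥W = 3 ∧
      T = {L | IsSimplexLine L ∧ L ≤ W}

/-- A monomial linear automorphism: `x ↦ (a₁ x_{σ(1)}, …, aₙ x_{σ(n)})` with all
`aᵢ` nonzero and `σ` a permutation. -/
def IsMonomial {F : Type} [Field F] {n : ℕ} (l : (Fin n → F) ≃ₗ[F] (Fin n → F)) : Prop :=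
  ∃ (a : Fin n → F) (σ : Equiv.Perm (Fin n)),
    (∀ i, a i ≠ 0) ∧ ∀ (x : Fin n → F) (i : Fin n), l x i = a i * x (σ i)

/-- Coordinatewise inversion `I` (with `0⁻¹ = 0`). -/
def vecInv {F : Type} [Field F] {n : ℕ} (x : Fin n → F) : Fin n → F := fun i => (x i)⁻¹

section Aux
variable {F : Type} [Field F]

lemma goodPair_li {n : ℕ} {x y : Fin n → F} (h : GoodPair x y) {i j : Fin n} (hij : i ≠ j) :
    LinearIndependent F ![x, y] := by
  rw [LinearIndependent.pair_iff]
  intro s t hst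
  have hi := congrFun hst i
  have hj := congrFun hst j
  simp only [Pi.add_apply, Pi.smul_apply, smul_eq_mul, Pi.zero_apply] at hi hj
  have hd : x i * y j - x j * y i ≠ 0 := sub_ne_zero.mpr (h i j hij)
  constructor
  · have hs : s * (x i * y j - x j * y i) = 0 := by linear_combination y j * hi - y i * hj
    exact (mul_eq_zero.mp hs).resolve_right hd
  · have ht : t * (x i * y j - x j * y i) = 0 := by linear_combination x i * hj - x j * hi
    exact (mul_eq_zero.mp ht).resolve_right hd

lemma range_pair {n : ℕ} (x y : Fin n → F) : Set.range ![x, y] = {x, y} := by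
  ext z
  constructor
  · rintro ⟨i, rfl⟩
    fin_cases i <;> simp
  · rintro (rfl | rfl)
    exacts [⟨0, rfl⟩, ⟨1, rfl⟩]

set_option maxHeartbeats 1000000 in
lemma finrank_span_goodPair {n : ℕ} {x y : Fin n → F} (h : GoodPair x y)
    {i j : Fin n} (hij : i ≠ j) : finrank F ↥(span F ({x, y} : Set (Fin n → F))) = 2 := by
  have h2 := goodPair_li h hij
  have h3 := finrank_span_eq_card (R := F) h2
  rw [range_pair] at h3
  rw [h3]
  simp
end Aux

section Rows
variable {F : Type} [Field F] [Fintype F]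

/-- Index of a field element among the first `card F` coordinates. -/
noncomputable def idxEmb (t : F) : Fin (Fintype.card F + 1) := (Fintype.equivFin F t).castSucc

noncomputable def rowA : Fin (Fintype.card F + 1) → F := fun i =>
  if (i : ℕ) < Fintype.card F then 1 else 0

noncomputable def rowB (b : F) : Fin (Fintype.card F + 1) → F := fun i =>
  if h : (i : ℕ) < Fintype.card F then ((Fintype.equivFin F).symm ⟨i, h⟩ : F) else b

noncomputable def rowC (f : F → F) (c : F) : Fin (Fintype.card F + 1) → F := fun i =>
  if h : (i : ℕ) < Fintype.card F then f ((Fintype.equivFin F).symm ⟨i, h⟩) else c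

lemma idx_lt (t : F) : ((idxEmb t : Fin (Fintype.card F + 1)) : ℕ) < Fintype.card F := by
  simpa [idxEmb] using (Fintype.equivFin F t).isLt

lemma idx_eq (t : F) (h : ((idxEmb t : Fin (Fintype.card F + 1)) : ℕ) < Fintype.card F) :
    (Fintype.equivFin F).symm ⟨(idxEmb t : Fin (Fintype.card F + 1)), h⟩ = t := by
  have : (⟨(idxEmb t : Fin (Fintype.card F + 1)), h⟩ : Fin (Fintype.card F)) = Fintype.equivFin F t := by
    ext; simp [idxEmb]
  rw [this, Equiv.symm_apply_apply]

@[simp] lemma rowA_idx (t : F) : rowA (idxEmb t) = 1 := by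
  simp [rowA, idx_lt t]

@[simp] lemma rowA_last : rowA (Fin.last (Fintype.card F)) = 0 := by
  simp [rowA]

@[simp] lemma rowB_idx (b : F) (t : F) : rowB b (idxEmb t) = t := by
  rw [rowB, dif_pos (idx_lt t), idx_eq t (idx_lt t)]

@[simp] lemma rowB_last (b : F) : rowB b (Fin.last (Fintype.card F)) = b := by
  simp [rowB]

@[simp] lemma rowC_idx (f : F → F) (c : F) (t : F) : rowC f c (idxEmb t) = f t := by
  rw [rowC, dif_pos (idx_lt t), idx_eq t (idx_lt t)]

@[simp] lemma rowC_last (f : F → F) (c : F) : rowC f c (Fin.last (Fintype.card F)) = c := by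
  simp [rowC]

lemma symm_ne {i j : Fin (Fintype.card F + 1)} (hi : (i : ℕ) < Fintype.card F)
    (hj : (j : ℕ) < Fintype.card F) (hij : i ≠ j) :
    (Fintype.equivFin F).symm ⟨i, hi⟩ ≠ (Fintype.equivFin F).symm ⟨j, hj⟩ := by
  intro h
  apply hij
  have h2 : (⟨i, hi⟩ : Fin (Fintype.card F)) = ⟨j, hj⟩ := (Fintype.equivFin F).symm.injective h
  rw [Fin.mk.injEq] at h2
  exact Fin.ext h2

lemma eq_of_not_lt {i j : Fin (Fintype.card F + 1)} (hi : ¬ (i : ℕ) < Fintype.card F)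
    (hj : ¬ (j : ℕ) < Fintype.card F) : i = j := by
  have := i.isLt
  have := j.isLt
  exact Fin.ext (by omega)

lemma build_goodPairs (f : F → F) (b c : F)
    (hfinj : Function.Injective f)
    (hcross : ∀ s t : F, s ≠ t → s * f t ≠ t * f s)
    (hb : b ≠ 0) (hc : c ≠ 0)
    (hinf : ∀ t : F, t * c ≠ f t * b) :
    GoodPair rowA (rowB b) ∧ GoodPair (rowB b) (rowC f c) ∧ GoodPair rowA (rowC f c) := by
  refine ⟨?_, ?_, ?_⟩ <;> intro i j hij <;>
    by_cases hi : (i : ℕ) < Fintype.card F <;> by_cases hj : (j : ℕ) < Fintype.card F <;>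
    simp only [rowA, rowB, rowC, dif_pos, dif_neg, if_pos, if_neg, hi, hj, if_true, if_false,
      dite_true, dite_false] <;>
    [skip; skip; skip; exact absurd (eq_of_not_lt hi hj) hij;
     skip; skip; skip; exact absurd (eq_of_not_lt hi hj) hij;
     skip; skip; skip; exact absurd (eq_of_not_lt hi hj) hij]
  · -- rowA/rowB, both small
    simpa using (symm_ne hj hi (Ne.symm hij))
  · simpa using hb
  · simpa using (Ne.symm hb)
  · -- rowB/rowC, both small
    exact hcross _ _ (symm_ne hi hj hij)
  · -- i small, j = last : t * c ≠ b * f t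
    have := hinf ((Fintype.equivFin F).symm ⟨i, hi⟩)
    intro h; exact this (by linear_combination h)
  · have := hinf ((Fintype.equivFin F).symm ⟨j, hj⟩)
    intro h; exact this (by linear_combination -h)
  · -- rowA/rowC, both small
    simpa using fun h => (symm_ne hj hi (Ne.symm hij)) (hfinj h)
  · simpa using hc
  · simpa using (Ne.symm hc)

end Rows

section Funs
variable {F : Type} [Field F] [DecidableEq F]

variable (F) in
noncomputable def fOdd : F → F := fun t => Equiv.swap (-1 : F) 0 (t + 1)

variable (F) in
noncomputable def fEven : F → F := fun t => Equiv.swap (1 : F) 0 (t * t)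

lemma fOdd_inj : Function.Injective (fOdd F) :=
  (Equiv.swap (-1 : F) 0).injective.comp (fun a b h => by linear_combination h)

lemma fOdd_neg_one : fOdd F (-1) = -1 := by
  simp [fOdd, Equiv.swap_apply_right]

lemma fOdd_neg_two : fOdd F (-2) = 0 := by
  have h : (-2 : F) + 1 = -1 := by ring
  simp only [fOdd]
  rw [h, Equiv.swap_apply_left]

lemma fOdd_eval {t : F} (h1 : t ≠ -1) (h2 : t ≠ -2) : fOdd F t = t + 1 := by
  simp only [fOdd]
  rw [Equiv.swap_apply_of_ne_of_ne]
  · intro h; exact h2 (by linear_combination h)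
  · intro h; exact h1 (by linear_combination h)

lemma fOdd_cross (h2 : (2:F) ≠ 0) (s t : F) (hst : s ≠ t) : s * fOdd F t ≠ t * fOdd F s := by
  by_cases hs1 : s = -1
  · subst hs1
    by_cases ht2 : t = -2
    · subst ht2
      rw [fOdd_neg_one, fOdd_neg_two]
      intro h; exact h2 (by linear_combination -h)
    · have ht1 : t ≠ -1 := fun h => hst (h ▸ rfl)
      rw [fOdd_neg_one, fOdd_eval ht1 ht2]
      intro h; exact one_ne_zero (α := F) (by linear_combination -h)
  · by_cases hs2 : s = -2
    · subst hs2
      by_cases ht1 : t = -1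
      · subst ht1
        rw [fOdd_neg_two, fOdd_neg_one]
        intro h; exact h2 (by linear_combination h)
      · have ht2 : t ≠ -2 := fun h => hst (h ▸ rfl)
        rw [fOdd_neg_two, fOdd_eval ht1 ht2]
        intro h
        have h' : (-2 : F) * (t + 1) = 0 := by linear_combination h
        rcases mul_eq_zero.mp h' with h'' | h''
        · exact h2 (by linear_combination -h'')
        · exact ht1 (by linear_combination h'')
    · by_cases ht1 : t = -1
      · subst ht1
        rw [fOdd_eval hs1 hs2, fOdd_neg_one]
        intro h; exact one_ne_zero (α := F) (by linear_combination h)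
      · by_cases ht2 : t = -2
        · subst ht2
          rw [fOdd_eval hs1 hs2, fOdd_neg_two]
          intro h
          have h' : (-2 : F) * (s + 1) = 0 := by linear_combination -h
          rcases mul_eq_zero.mp h' with h'' | h''
          · exact h2 (by linear_combination -h'')
          · exact hs1 (by linear_combination h'')
        · rw [fOdd_eval ht1 ht2, fOdd_eval hs1 hs2]
          intro h; exact hst (by linear_combination h)

lemma fOdd_inf (h2 : (2:F) ≠ 0) (t : F) : t * 1 ≠ fOdd F t * 2 := by
  by_cases ht1 : t = -1
  · subst ht1
    rw [fOdd_neg_one]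
    intro h; exact one_ne_zero (α := F) (by linear_combination h)
  · by_cases ht2 : t = -2
    · subst ht2
      rw [fOdd_neg_two]
      intro h; exact h2 (by linear_combination -h)
    · rw [fOdd_eval ht1 ht2]
      intro h; exact ht2 (by linear_combination -h)

lemma sq_inj (h2 : (2:F) = 0) : Function.Injective (fun t : F => t * t) := by
  intro a b h
  dsimp at h
  have h' : (a - b) * (a - b) = 0 := by linear_combination h + (b * b - a * b) * h2
  have := mul_self_eq_zero.mp h'
  linear_combination this

lemma fEven_inj (h2 : (2:F) = 0) : Function.Injective (fEven F) :=
  (Equiv.swap (1 : F) 0).injective.comp (sq_inj h2)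

lemma fEven_zero : fEven F 0 = 1 := by
  have h : (0:F) * 0 = 0 := by ring
  simp only [fEven]
  rw [h, Equiv.swap_apply_right]

lemma fEven_one : fEven F 1 = 0 := by
  have h : (1:F) * 1 = 1 := by ring
  simp only [fEven]
  rw [h, Equiv.swap_apply_left]

lemma fEven_eval (h2 : (2:F) = 0) {t : F} (h0 : t ≠ 0) (h1 : t ≠ 1) : fEven F t = t * t := by
  simp only [fEven]
  rw [Equiv.swap_apply_of_ne_of_ne]
  · intro h
    apply h1
    have h' : (t - 1) * (t - 1) = 0 := by linear_combination h + (1 - t) * h2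
    have := mul_self_eq_zero.mp h'
    linear_combination this
  · exact mul_ne_zero h0 h0

lemma fEven_cross (h2 : (2:F) = 0) (s t : F) (hst : s ≠ t) : s * fEven F t ≠ t * fEven F s := by
  by_cases hs0 : s = 0
  · subst hs0
    have ht0 : t ≠ 0 := fun h => hst (h ▸ rfl)
    by_cases ht1 : t = 1
    · subst ht1
      rw [fEven_one, fEven_zero]
      intro h; exact one_ne_zero (α := F) (by linear_combination -h)
    · rw [fEven_eval h2 ht0 ht1, fEven_zero]
      intro h; exact ht0 (by linear_combination -h)
  · by_cases hs1 : s = 1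
    · subst hs1
      by_cases ht0 : t = 0
      · subst ht0
        rw [fEven_one, fEven_zero]
        intro h; exact one_ne_zero (α := F) (by linear_combination h)
      · have ht1 : t ≠ 1 := fun h => hst (h ▸ rfl)
        rw [fEven_eval h2 ht0 ht1, fEven_one]
        intro h
        have h' : t * t = 0 := by linear_combination h
        rcases mul_eq_zero.mp h' with h'' | h'' <;> exact ht0 h''
    · by_cases ht0 : t = 0
      · subst ht0
        rw [fEven_zero, fEven_eval h2 hs0 hs1]
        intro h; exact hs0 (by linear_combination h)
      · by_cases ht1 : t = 1
        · subst ht1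
          rw [fEven_one, fEven_eval h2 hs0 hs1]
          intro h
          have h' : s * s = 0 := by linear_combination -h
          rcases mul_eq_zero.mp h' with h'' | h'' <;> exact hs0 h''
        · rw [fEven_eval h2 ht0 ht1, fEven_eval h2 hs0 hs1]
          intro h
          have h' : s * t * (t - s) = 0 := by linear_combination h
          rcases mul_eq_zero.mp h' with h'' | h''
          · rcases mul_eq_zero.mp h'' with h3 | h3
            · exact hs0 h3
            · exact ht0 h3
          · exact hst (by linear_combination -h'')

lemma fEven_inf (h2 : (2:F) = 0) (t : F) : t * 1 ≠ fEven F t * 1 := by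
  by_cases ht0 : t = 0
  · subst ht0
    rw [fEven_zero]
    intro h; exact one_ne_zero (α := F) (by linear_combination -h)
  · by_cases ht1 : t = 1
    · subst ht1
      rw [fEven_one]
      intro h; exact one_ne_zero (α := F) (by linear_combination h)
    · rw [fEven_eval h2 ht0 ht1]
      intro h
      have h' : t * (t - 1) = 0 := by linear_combination -h
      rcases mul_eq_zero.mp h' with h'' | h''
      · exact ht0 h''
      · exact ht1 (by linear_combination h'')

end Funs

section Indep
variable {F : Type} [Field F] [Fintype F] [DecidableEq F]

lemma exists_avoid (s : Finset F) (h : s.card < Fintype.card F) : ∃ a : F, a ∉ s := by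
  by_contra hc
  push_neg at hc
  have hsub : (Finset.univ : Finset F) ⊆ s := fun x _ => hc x
  have := Finset.card_le_card hsub
  rw [Finset.card_univ] at this
  omega

lemma li_odd (h2 : (2:F) ≠ 0) (hq : 5 ≤ Fintype.card F) :
    LinearIndependent F ![rowA, rowB 2, rowC (fOdd F) 1] := by
  have h01 : (0:F) ≠ -1 := fun h => one_ne_zero (α := F) (by linear_combination h)
  have h02 : (0:F) ≠ -2 := fun h => h2 (by linear_combination h)
  have hcard : ({0, -1, -2} : Finset F).card < Fintype.card F := by
    have a1 := Finset.card_insert_le (0:F) ({-1, -2} : Finset F)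
    have a2 := Finset.card_insert_le (-1:F) ({-2} : Finset F)
    have a3 : ({-2} : Finset F).card = 1 := Finset.card_singleton _
    omega
  obtain ⟨u, hu⟩ := exists_avoid _ hcard
  simp only [Finset.mem_insert, Finset.mem_singleton, not_or] at hu
  obtain ⟨hu0, hu1, hu2⟩ := hu
  rw [Fintype.linearIndependent_iff]
  intro g hg
  rw [Fin.sum_univ_three] at hg
  simp only [Matrix.cons_val_zero, Matrix.cons_val_one, Matrix.head_cons, Matrix.cons_val_two,
    Matrix.tail_cons] at hg
  have e1 := congrFun hg (Fin.last (Fintype.card F))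
  have e2 := congrFun hg (idxEmb (0:F))
  have e3 := congrFun hg (idxEmb u)
  simp only [Pi.add_apply, Pi.smul_apply, smul_eq_mul, Pi.zero_apply, rowA_idx, rowA_last,
    rowB_idx, rowB_last, rowC_idx, rowC_last] at e1 e2 e3
  rw [fOdd_eval h01 h02] at e2
  rw [fOdd_eval hu1 hu2] at e3
  have hg12 : g 1 + g 2 = 0 := by
    have h' : u * (g 1 + g 2) = 0 := by linear_combination e3 - e2
    exact (mul_eq_zero.mp h').resolve_left hu0
  have hg1 : g 1 = 0 := by linear_combination e1 - hg12
  have hg2 : g 2 = 0 := by linear_combination hg12 - hg1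
  have hg0 : g 0 = 0 := by linear_combination e2 - hg2
  intro i
  fin_cases i
  · exact hg0
  · exact hg1
  · exact hg2

lemma li_even (h2 : (2:F) = 0) (hq : 5 ≤ Fintype.card F) :
    LinearIndependent F ![rowA, rowB 1, rowC (fEven F) 1] := by
  have hcard2 : ({0, 1} : Finset F).card < Fintype.card F := by
    have a1 := Finset.card_insert_le (0:F) ({1} : Finset F)
    have a3 : ({1} : Finset F).card = 1 := Finset.card_singleton _
    omega
  obtain ⟨a, ha⟩ := exists_avoid _ hcard2
  simp only [Finset.mem_insert, Finset.mem_singleton, not_or] at ha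
  obtain ⟨ha0, ha1⟩ := ha
  have hcard4 : ({0, 1, a, 1 - a} : Finset F).card < Fintype.card F := by
    have a1 := Finset.card_insert_le (0:F) ({1, a, 1 - a} : Finset F)
    have a2 := Finset.card_insert_le (1:F) ({a, 1 - a} : Finset F)
    have a3 := Finset.card_insert_le (a:F) ({1 - a} : Finset F)
    have a4 : ({1 - a} : Finset F).card = 1 := Finset.card_singleton _
    omega
  obtain ⟨b, hb⟩ := exists_avoid _ hcard4
  simp only [Finset.mem_insert, Finset.mem_singleton, not_or] at hb
  obtain ⟨hb0, hb1, hba, hb1a⟩ := hb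
  rw [Fintype.linearIndependent_iff]
  intro g hg
  rw [Fin.sum_univ_three] at hg
  simp only [Matrix.cons_val_zero, Matrix.cons_val_one, Matrix.head_cons, Matrix.cons_val_two,
    Matrix.tail_cons] at hg
  have e1 := congrFun hg (Fin.last (Fintype.card F))
  have e2 := congrFun hg (idxEmb a)
  have e3 := congrFun hg (idxEmb b)
  simp only [Pi.add_apply, Pi.smul_apply, smul_eq_mul, Pi.zero_apply, rowA_idx, rowA_last,
    rowB_idx, rowB_last, rowC_idx, rowC_last] at e1 e2 e3
  rw [fEven_eval h2 ha0 ha1] at e2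
  rw [fEven_eval h2 hb0 hb1] at e3
  have hstep : (a - b) * (g 1 + (a + b) * g 2) = 0 := by linear_combination e2 - e3
  have h' : g 1 + (a + b) * g 2 = 0 :=
    (mul_eq_zero.mp hstep).resolve_left (sub_ne_zero.mpr (fun h => hba h.symm))
  have h3 : (a + b - 1) * g 2 = 0 := by linear_combination h' - e1
  have hg2 : g 2 = 0 :=
    (mul_eq_zero.mp h3).resolve_left (fun h => hb1a (by linear_combination h))
  have hg1 : g 1 = 0 := by linear_combination e1 - hg2
  have hg0 : g 0 = 0 := by linear_combination e2 - a * hg1 - (a * a) * hg2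
  intro i
  fin_cases i
  · exact hg0
  · exact hg1
  · exact hg2

lemma key_rows (hq : 5 ≤ Fintype.card F) :
    ∃ r1 r2 r3 : Fin (Fintype.card F + 1) → F,
      GoodPair r1 r2 ∧ GoodPair r2 r3 ∧ GoodPair r1 r3 ∧ LinearIndependent F ![r1, r2, r3] := by
  by_cases h2 : (2:F) = 0
  · obtain ⟨g1, g2, g3⟩ := build_goodPairs (fEven F) 1 1 (fEven_inj h2) (fEven_cross h2)
      one_ne_zero one_ne_zero (fEven_inf h2)
    exact ⟨_, _, _, g1, g2, g3, li_even h2 hq⟩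
  · obtain ⟨g1, g2, g3⟩ := build_goodPairs (fOdd F) 2 1 fOdd_inj (fOdd_cross h2)
      h2 one_ne_zero (fOdd_inf h2)
    exact ⟨_, _, _, g1, g2, g3, li_odd h2 hq⟩

end Indep
section Geometry
variable {F : Type} [Field F]

lemma simplex_finrank {n : ℕ} (hn : 2 ≤ n) {L : Submodule F (Fin n → F)}
    (hL : IsSimplexLine L) : finrank F ↥L = 2 := by
  obtain ⟨x, y, hxy, rfl⟩ := hL
  exact finrank_span_goodPair hxy (i := ⟨0, by omega⟩) (j := ⟨1, by omega⟩)
    (by intro h; exact absurd (congrArg Fin.val h) (by simp))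

lemma tri_bot {n : ℕ} {r1 r2 r3 : Fin n → F} (hli : LinearIndependent F ![r1, r2, r3]) :
    span F {r1, r2} ⊓ span F {r2, r3} ⊓ span F {r1, r3} = ⊥ := by
  rw [eq_bot_iff]
  rintro v hv
  rw [Submodule.mem_inf, Submodule.mem_inf] at hv
  obtain ⟨⟨h1, h2⟩, h3⟩ := hv
  rw [Submodule.mem_span_pair] at h1 h2 h3
  obtain ⟨a, b, e1⟩ := h1
  obtain ⟨c, d, e2⟩ := h2
  obtain ⟨e, k, e3⟩ := h3
  have hco := Fintype.linearIndependent_iff.mp hli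
  have q1 := hco ![a, b - c, -d] (by
    rw [Fin.sum_univ_three]
    simp only [Matrix.cons_val_zero, Matrix.cons_val_one, Matrix.head_cons, Matrix.cons_val_two,
      Matrix.tail_cons]
    have hmod : a • r1 + (b - c) • r2 + (-d) • r3 = (a • r1 + b • r2) - (c • r2 + d • r3) := by
      module
    rw [hmod, e1, e2, sub_self])
  have q2 := hco ![a - e, b, -k] (by
    rw [Fin.sum_univ_three]
    simp only [Matrix.cons_val_zero, Matrix.cons_val_one, Matrix.head_cons, Matrix.cons_val_two,
      Matrix.tail_cons]
    have hmod : (a - e) • r1 + b • r2 + (-k) • r3 = (a • r1 + b • r2) - (e • r1 + k • r3) := by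
      module
    rw [hmod, e1, e3, sub_self])
  have ha : a = 0 := by simpa using q1 0
  have hb : b = 0 := by simpa using q2 1
  rw [Submodule.mem_bot]
  rw [← e1, ha, hb]
  simp

lemma top_of_rows {n : ℕ} (hn : 2 ≤ n) [Fintype F] (r1 r2 r3 : Fin n → F)
    (h12 : GoodPair r1 r2) (h23 : GoodPair r2 r3) (h13 : GoodPair r1 r3)
    (hli : LinearIndependent F ![r1, r2, r3]) :
    IsGammaTop {L : Submodule F (Fin n → F) |
      IsSimplexLine L ∧ L ≤ span F (Set.range ![r1, r2, r3])} := by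
  set W : Submodule F (Fin n → F) := span F (Set.range ![r1, r2, r3]) with hWdef
  have hW3 : finrank F ↥W = 3 := by
    rw [hWdef, finrank_span_eq_card hli]
    simp
  have hr1W : r1 ∈ W := subset_span ⟨0, rfl⟩
  have hr2W : r2 ∈ W := subset_span ⟨1, rfl⟩
  have hr3W : r3 ∈ W := subset_span ⟨2, rfl⟩
  have hspanW : ∀ x y : Fin n → F, x ∈ W → y ∈ W → span F {x, y} ≤ W := by
    intro x y hx hy
    rw [span_le]
    rintro z (rfl | rfl)
    · exact hx
    · exact hy
  -- the three distinguished lines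
  have hL1 : IsSimplexLine (span F {r1, r2}) := ⟨r1, r2, h12, rfl⟩
  have hL2 : IsSimplexLine (span F {r2, r3}) := ⟨r2, r3, h23, rfl⟩
  have hL3 : IsSimplexLine (span F {r1, r3}) := ⟨r1, r3, h13, rfl⟩
  have hmem1 : span F {r1, r2} ∈ {L : Submodule F (Fin n → F) | IsSimplexLine L ∧ L ≤ W} :=
    ⟨hL1, hspanW _ _ hr1W hr2W⟩
  have hmem2 : span F {r2, r3} ∈ {L : Submodule F (Fin n → F) | IsSimplexLine L ∧ L ≤ W} :=
    ⟨hL2, hspanW _ _ hr2W hr3W⟩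
  have hmem3 : span F {r1, r3} ∈ {L : Submodule F (Fin n → F) | IsSimplexLine L ∧ L ≤ W} :=
    ⟨hL3, hspanW _ _ hr1W hr3W⟩
  have hclique : IsGammaClique {L : Submodule F (Fin n → F) | IsSimplexLine L ∧ L ≤ W} := by
    constructor
    · exact fun L hL => hL.1
    · intro L hL L' hL' hne
      have d2 : finrank F ↥L = 2 := simplex_finrank hn hL.1
      have d2' : finrank F ↥L' = 2 := simplex_finrank hn hL'.1
      have hsup_le : L ⊔ L' ≤ W := sup_le hL.2 hL'.2
      have h3 : finrank F ↥(L ⊔ L') ≤ 3 := hW3 ▸ Submodule.finrank_mono hsup_le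
      have hlt : L < L ⊔ L' := by
        refine lt_of_le_of_ne le_sup_left (fun h => hne ?_)
        have hle : L' ≤ L := h ▸ le_sup_right
        exact (Submodule.eq_of_le_of_finrank_le hle (by rw [d2, d2'])).symm
      have h4 : 2 < finrank F ↥(L ⊔ L') := d2 ▸ Submodule.finrank_lt_finrank_of_lt hlt
      have hsum := Submodule.finrank_sup_add_finrank_inf_eq L L'
      omega
  refine ⟨hclique, ?_, W, hW3, rfl⟩
  intro T' hT' hsub
  ext L'
  constructor
  · intro hL'T'
    have hsimp : IsSimplexLine L' := hT'.1 L' hL'T'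
    by_cases hle : L' ≤ W
    · exact ⟨hsimp, hle⟩
    exfalso
    have d2' : finrank F ↥L' = 2 := simplex_finrank hn hsimp
    -- L' meets each of the three lines in dimension one
    have hint : ∀ M, M ∈ {L : Submodule F (Fin n → F) | IsSimplexLine L ∧ L ≤ W} →
        finrank F ↥(L' ⊓ M) = 1 := by
      intro M hM
      have hneM : L' ≠ M := fun h => hle (h ▸ hM.2)
      exact hT'.2 L' hL'T' M (hsub hM) hneM
    have h1 := hint _ hmem1
    have h2 := hint _ hmem2
    have h3 := hint _ hmem3
    set P : Submodule F (Fin n → F) := L' ⊓ W with hPdef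
    have hP1le : L' ⊓ span F {r1, r2} ≤ P := inf_le_inf le_rfl hmem1.2
    have hP2le : L' ⊓ span F {r2, r3} ≤ P := inf_le_inf le_rfl hmem2.2
    have hP3le : L' ⊓ span F {r1, r3} ≤ P := inf_le_inf le_rfl hmem3.2
    have hPge : 1 ≤ finrank F ↥P := h1 ▸ Submodule.finrank_mono hP1le
    have hPlt : P < L' := by
      refine lt_of_le_of_ne inf_le_left (fun h => hle ?_)
      rw [← h]
      exact inf_le_right
    have hPle : finrank F ↥P < 2 := d2' ▸ Submodule.finrank_lt_finrank_of_lt hPlt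
    have hPrank : finrank F ↥P = 1 := by omega
    have heq1 : L' ⊓ span F {r1, r2} = P :=
      Submodule.eq_of_le_of_finrank_le hP1le (by omega)
    have heq2 : L' ⊓ span F {r2, r3} = P :=
      Submodule.eq_of_le_of_finrank_le hP2le (by omega)
    have heq3 : L' ⊓ span F {r1, r3} = P :=
      Submodule.eq_of_le_of_finrank_le hP3le (by omega)
    have hPbot : P ≤ ⊥ := by
      rw [← tri_bot hli]
      exact le_inf (le_inf (heq1 ▸ inf_le_right) (heq2 ▸ inf_le_right)) (heq3 ▸ inf_le_right)
    have : finrank F ↥P = 0 := by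
      rw [le_bot_iff.mp hPbot]
      exact finrank_bot F _
    omega
  · intro hLT
    exact hsub hLT

end Geometry

/-- For every prime power q ≥ 5 (q = |F|), the graph Γ of q-ary simplex codes of
dimension 2 in F^(q+1) contains a top. -/
theorem gamma_contains_top (F : Type) [Field F] [Fintype F]
    (hq : 5 ≤ Fintype.card F) :
    ∃ T : Set (Submodule F (Fin (Fintype.card F + 1) → F)), IsGammaTop T := by
  classical
  obtain ⟨r1, r2, r3, h12, h23, h13, hli⟩ := key_rows hq
  exact ⟨_, top_of_rows (by omega) r1 r2 r3 h12 h23 h13 hli⟩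
end

section
/- For q = 5, every top of the graph Γ of 5-ary simplex codes of dimension 2 contains precisely 4 simplex lines. -/
open Submodule Module

instance : Fact (Nat.Prime 5) := ⟨by norm_num⟩

/- ============================================================
   Auxiliary development
   ============================================================ -/

namespace SimplexTop

abbrev F5 := ZMod 5
abbrev V6 := Fin 6 → ZMod 5

instance decGoodPair {F : Type} [Field F] [DecidableEq F] {n : ℕ} (x y : Fin n → F) :
    Decidable (GoodPair x y) := by unfold GoodPair; infer_instance

def xx : V6 := ![0,1,1,1,1,1]
def yy : V6 := ![1,0,1,2,3,4]

lemma good_xy : GoodPair xx yy := by decide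

/-! ### Basic facts about good pairs -/

variable {x y u z v w : V6}

lemma goodPair_combo_eq_zero (h : GoodPair x y) {a b : F5}
    (hab : a • x + b • y = 0) : a = 0 ∧ b = 0 := by
  have h01 := h 0 1 (by decide)
  have e0 := congrFun hab 0
  have e1 := congrFun hab 1
  simp only [Pi.add_apply, Pi.smul_apply, smul_eq_mul, Pi.zero_apply] at e0 e1
  constructor
  · by_contra ha
    apply h01
    have h2 : a * (x 0 * y 1 - x 1 * y 0) = 0 := by linear_combination y 1 * e0 - y 0 * e1
    rcases mul_eq_zero.mp h2 with h' | h'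
    · exact absurd h' ha
    · exact sub_eq_zero.mp h'
  · by_contra hb
    apply h01
    have h2 : b * (x 0 * y 1 - x 1 * y 0) = 0 := by linear_combination x 0 * e1 - x 1 * e0
    rcases mul_eq_zero.mp h2 with h' | h'
    · exact absurd h' hb
    · exact sub_eq_zero.mp h'

lemma goodPair_y_ne (h : GoodPair x y) : y ≠ 0 := by
  intro hy
  have := h 0 1 (by decide); rw [hy] at this; simp at this

lemma goodPair_li (h : GoodPair x y) : LinearIndependent F5 ![x, y] := by
  rw [linearIndependent_fin2]
  refine ⟨by simpa using goodPair_y_ne h, fun a ha => ?_⟩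
  have h2 : (1 : F5) • x + (-a) • y = 0 := by
    simp only [Matrix.cons_val_one, Matrix.head_cons, Matrix.cons_val_zero] at ha
    rw [← ha]; module
  simpa using (goodPair_combo_eq_zero h h2).1

lemma span_pair_eq_range : span F5 {x, y} = span F5 (Set.range ![x, y]) := by
  congr 1
  ext w
  simp [Fin.exists_fin_two]; tauto

lemma finrank_span_pair_good (h : GoodPair x y) :
    finrank F5 ↥(span F5 {x, y}) = 2 := by
  rw [span_pair_eq_range, finrank_span_eq_card (goodPair_li h)]
  simp

lemma simplexLine_finrank {L : Submodule F5 V6} (h : IsSimplexLine L) :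
    finrank F5 ↥L = 2 := by
  obtain ⟨a, b, hab, rfl⟩ := h
  exact finrank_span_pair_good hab

/-- GoodPair is preserved by invertible changes of basis. -/
lemma goodPair_smul_combo (h : GoodPair x y) {a b c d : F5}
    (hdet : a * d - b * c ≠ 0) : GoodPair (a • x + b • y) (c • x + d • y) := by
  intro i j hij heq
  simp only [Pi.add_apply, Pi.smul_apply, smul_eq_mul] at heq
  apply h i j hij
  have h2 : (a * d - b * c) * (x i * y j - x j * y i) = 0 := by linear_combination heq
  rcases mul_eq_zero.mp h2 with h' | h'
  · exact absurd h' hdet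
  · exact sub_eq_zero.mp h'

/-! ### Two distinct planes through a common nonzero vector -/

lemma inf_finrank_one {A B : Submodule F5 V6} (hA : finrank F5 ↥A = 2)
    (hB : finrank F5 ↥B = 2) (hAB : A ≠ B) (huA : u ∈ A) (huB : u ∈ B)
    (hu : u ≠ 0) : finrank F5 ↥(A ⊓ B) = 1 := by
  have h1 : 1 ≤ finrank F5 ↥(A ⊓ B) := by
    have hle : span F5 {u} ≤ A ⊓ B := by
      rw [span_le, Set.singleton_subset_iff]; exact ⟨huA, huB⟩
    calc 1 = finrank F5 ↥(span F5 {u}) := (finrank_span_singleton hu).symm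
    _ ≤ _ := Submodule.finrank_mono hle
  have h2 : finrank F5 ↥(A ⊓ B) ≤ 2 := hA ▸ Submodule.finrank_mono inf_le_left
  rcases Nat.lt_or_ge (finrank F5 ↥(A ⊓ B)) 2 with hlt | hge
  · omega
  · exfalso
    have hABeq : A ⊓ B = A :=
      Submodule.eq_of_le_of_finrank_le inf_le_left (by omega)
    have hle : A ≤ B := hABeq ▸ inf_le_right
    exact hAB (Submodule.eq_of_le_of_finrank_le hle (by omega))

/-! ### Span membership via Cramer's rule -/

lemma mem_span_pair_char (hd : x 0 * y 1 - x 1 * y 0 ≠ 0) :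
    v ∈ span F5 {x, y} ↔
      (x 0 * y 1 - x 1 * y 0) • v =
        (v 0 * y 1 - v 1 * y 0) • x + (x 0 * v 1 - x 1 * v 0) • y := by
  constructor
  · intro hv
    obtain ⟨p, q, hpq⟩ := mem_span_pair.mp hv
    have e0 := congrFun hpq 0
    have e1 := congrFun hpq 1
    simp only [Pi.add_apply, Pi.smul_apply, smul_eq_mul] at e0 e1
    funext i
    have hvi := congrFun hpq i
    simp only [Pi.add_apply, Pi.smul_apply, smul_eq_mul] at hvi
    simp only [Pi.add_apply, Pi.smul_apply, smul_eq_mul]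
    linear_combination (x 0 * y 1 - x 1 * y 0) * hvi.symm +
      (x i * y 1 - y i * x 1) * e0 + (y i * x 0 - x i * y 0) * e1
  · intro hv
    have h2 : v = ((x 0 * y 1 - x 1 * y 0)⁻¹ * (v 0 * y 1 - v 1 * y 0)) • x +
        ((x 0 * y 1 - x 1 * y 0)⁻¹ * (x 0 * v 1 - x 1 * v 0)) • y := by
      rw [← smul_smul, ← smul_smul, ← smul_add, ← hv, smul_smul,
        inv_mul_cancel₀ hd, one_smul]
    rw [h2]
    exact add_mem (smul_mem _ _ (subset_span (by simp)))
      (smul_mem _ _ (subset_span (by simp)))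

lemma not_mem_span_char (hd : x 0 * y 1 - x 1 * y 0 ≠ 0)
    (hne : (x 0 * y 1 - x 1 * y 0) • v ≠
        (v 0 * y 1 - v 1 * y 0) • x + (x 0 * v 1 - x 1 * v 0) • y) :
    v ∉ span F5 {x, y} :=
  fun hm => hne ((mem_span_pair_char hd).mp hm)

lemma mem_span_triple {a b c : V6} :
    v ∈ span F5 {a, b, c} ↔ ∃ p q r : F5, v = p • a + q • b + r • c := by
  constructor
  · intro hv
    rw [show ({a, b, c} : Set V6) = insert a (insert b {c}) from rfl] at hv
    obtain ⟨p, z1, hz1, rfl⟩ := mem_span_insert.mp hv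
    obtain ⟨q, z2, hz2, rfl⟩ := mem_span_insert.mp hz1
    obtain ⟨r, rfl⟩ := mem_span_singleton.mp hz2
    exact ⟨p, q, r, by abel⟩
  · rintro ⟨p, q, r, rfl⟩
    refine add_mem (add_mem ?_ ?_) ?_ <;>
      exact smul_mem _ _ (subset_span (by simp))

lemma range_triple {a b c : V6} : Set.range ![a, b, c] = {a, b, c} := by
  ext w
  constructor
  · rintro ⟨i, rfl⟩; fin_cases i <;> simp
  · rintro (rfl | rfl | rfl)
    exacts [⟨0, rfl⟩, ⟨1, rfl⟩, ⟨2, rfl⟩]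

/-! ### Concrete additional simplex lines through the six points of `L0` -/

noncomputable def L0 : Submodule F5 V6 := span F5 {xx, yy}

def uu1 : V6 := ![1,1,2,3,4,0]
def uu2 : V6 := ![1,2,3,4,0,1]
def uu3 : V6 := ![1,3,4,0,1,2]
def uu4 : V6 := ![1,4,0,1,2,3]

lemma pair_witness {u z1 z2 : V6} (g1 : GoodPair u z1) (g2 : GoodPair u z2)
    (h1 : z1 ∉ span F5 {xx, yy}) (h2 : z2 ∉ span F5 {xx, yy})
    (d12 : z2 ∉ span F5 {u, z1}) (L1 : Submodule F5 V6) :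
    ∃ z : V6, GoodPair u z ∧ span F5 {u, z} ≠ span F5 {xx, yy} ∧
      span F5 {u, z} ≠ L1 := by
  by_cases hL : span F5 {u, z1} = L1
  · refine ⟨z2, g2, fun he => h2 ?_, fun he => d12 ?_⟩
    · exact he ▸ subset_span (by simp)
    · rw [← hL] at he
      exact he ▸ subset_span (by simp)
  · exact ⟨z1, g1, fun he => h1 (he ▸ subset_span (by simp)), hL⟩

/-- For each of the six projective points of the standard simplex line `L0`,
there is a simplex line through that point different from `L0` and from any
prescribed line `L1`. -/
lemma exists_line_through (u : V6)
    (hu : u = xx ∨ u = yy ∨ u = uu1 ∨ u = uu2 ∨ u = uu3 ∨ u = uu4)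
    (L1 : Submodule F5 V6) :
    ∃ z : V6, GoodPair u z ∧ span F5 {u, z} ≠ span F5 {xx, yy} ∧
      span F5 {u, z} ≠ L1 := by
  rcases hu with rfl | rfl | rfl | rfl | rfl | rfl
  · exact pair_witness (z1 := ![1,0,1,2,4,3]) (z2 := ![1,0,1,3,2,4]) (by decide)
      (by decide) (not_mem_span_char (by decide) (by decide))
      (not_mem_span_char (by decide) (by decide))
      (not_mem_span_char (by decide) (by decide)) L1
  · exact pair_witness (z1 := ![0,1,1,1,2,3]) (z2 := ![0,1,1,3,1,2]) (by decide)
      (by decide) (not_mem_span_char (by decide) (by decide))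
      (not_mem_span_char (by decide) (by decide))
      (not_mem_span_char (by decide) (by decide)) L1
  · exact pair_witness (z1 := ![0,1,1,1,1,2]) (z2 := ![0,1,1,1,1,3]) (by decide)
      (by decide) (not_mem_span_char (by decide) (by decide))
      (not_mem_span_char (by decide) (by decide))
      (not_mem_span_char (by decide) (by decide)) L1
  · exact pair_witness (z1 := ![0,1,1,1,2,1]) (z2 := ![0,1,1,1,3,1]) (by decide)
      (by decide) (not_mem_span_char (by decide) (by decide))
      (not_mem_span_char (by decide) (by decide))
      (not_mem_span_char (by decide) (by decide)) L1
  · exact pair_witness (z1 := ![0,1,1,1,3,2]) (z2 := ![0,1,1,2,1,1]) (by decide)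
      (by decide) (not_mem_span_char (by decide) (by decide))
      (not_mem_span_char (by decide) (by decide))
      (not_mem_span_char (by decide) (by decide)) L1
  · exact pair_witness (z1 := ![0,1,1,1,4,4]) (z2 := ![0,1,1,2,1,3]) (by decide)
      (by decide) (not_mem_span_char (by decide) (by decide))
      (not_mem_span_char (by decide) (by decide))
      (not_mem_span_char (by decide) (by decide)) L1

/-- A clique containing `L0` whose members all lie in `{L0, L1}`, where all the
lines pass through a common point of `L0`, is never maximal. -/
lemma not_max {T : Set (Submodule F5 V6)} (hclq : IsGammaClique T)
    (hmax : ∀ T' : Set (Submodule F5 V6), IsGammaClique T' → T ⊆ T' → T' = T)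
    (L1 : Submodule F5 V6) (hL1 : L1 ∈ T)
    (hsub : T ⊆ {span F5 {xx, yy}, L1}) (u : V6)
    (hu : u = xx ∨ u = yy ∨ u = uu1 ∨ u = uu2 ∨ u = uu3 ∨ u = uu4)
    (huT : u ∈ span F5 {xx, yy} ⊓ L1) : False := by
  have hu0 : u ≠ 0 := by rcases hu with rfl|rfl|rfl|rfl|rfl|rfl <;> decide
  obtain ⟨z, gz, hne0, hne1⟩ := exists_line_through u hu L1
  set L' := span F5 {u, z} with hL'def
  have hL'T : L' ∉ T := by
    intro h
    rcases hsub h with h' | h'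
    · exact hne0 h'
    · exact hne1 h'
  have huL' : u ∈ L' := subset_span (by simp)
  have hfr' : finrank F5 ↥L' = 2 := finrank_span_pair_good gz
  have hclq' : IsGammaClique (insert L' T) := by
    constructor
    · rintro L (rfl | hL)
      · exact ⟨u, z, gz, rfl⟩
      · exact hclq.1 L hL
    · rintro A (rfl | hA) B (rfl | hB) hAB
      · exact absurd rfl hAB
      · refine inf_finrank_one hfr' (simplexLine_finrank (hclq.1 B hB))
          (fun he => hL'T (he ▸ hB)) huL' ?_ hu0
        rcases hsub hB with rfl | rfl
        · exact huT.1
        · exact huT.2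
      · refine inf_finrank_one (simplexLine_finrank (hclq.1 A hA)) hfr'
          (fun he => hL'T (he ▸ hA)) ?_ huL' hu0
        rcases hsub hA with rfl | rfl
        · exact huT.1
        · exact huT.2
      · exact hclq.2 A hA B hB hAB
  have heq := hmax _ hclq' (Set.subset_insert _ _)
  exact hL'T (heq ▸ Set.mem_insert L' T)

/-! ### The finite core computation -/

def Good2 (x y : V6) : Prop :=
  ∀ i j : Fin 6, i < j → x i * y j ≠ x j * y i

instance decGood2 (x y : V6) : Decidable (Good2 x y) := by
  unfold Good2; infer_instance

lemma good2_iff (x y : V6) : Good2 x y ↔ GoodPair x y := by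
  constructor
  · intro h i j hij
    rcases lt_or_gt_of_ne hij with hlt | hlt
    · exact h i j hlt
    · exact (h j i hlt).symm
  · exact fun h i j hij => h i j (Fin.ne_of_lt hij)

def IsRepD (d : Fin 4 → F5) : Prop :=
  (d 0 = 1) ∨ (d 0 = 0 ∧ d 1 = 1) ∨ (d 0 = 0 ∧ d 1 = 0 ∧ d 2 = 1) ∨
    (d 0 = 0 ∧ d 1 = 0 ∧ d 2 = 0 ∧ d 3 = 1)

instance decIsRepD (d : Fin 4 → F5) : Decidable (IsRepD d) := by
  unfold IsRepD; infer_instance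

def cnt (w : V6) : ℕ :=
  (Finset.univ.filter (fun p : F5 × F5 =>
    Good2 (xx - p.1 • w) (yy - p.2 • w))).card

set_option maxRecDepth 4000000 in
set_option maxHeartbeats 8000000 in
theorem coreLemma : ∀ d : Fin 4 → F5, IsRepD d →
    cnt ![0, 0, d 0, d 1, d 2, d 3] = 1 ∨ cnt ![0, 0, d 0, d 1, d 2, d 3] = 2 ∨
      cnt ![0, 0, d 0, d 1, d 2, d 3] = 4 := by
  decide

/-! ### The main theorem for a top containing the standard simplex line -/

theorem main_norm (T : Set (Submodule F5 V6)) (hclq : IsGammaClique T)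
    (hmax : ∀ T' : Set (Submodule F5 V6), IsGammaClique T' → T ⊆ T' → T' = T)
    (W : Submodule F5 V6) (hW3 : finrank F5 ↥W = 3)
    (hTeq : T = {L | IsSimplexLine L ∧ L ≤ W})
    (hL0 : span F5 {xx, yy} ∈ T) : T.ncard = 4 := by
  obtain ⟨hmem, hadj⟩ := hclq
  have hL0' := hL0
  rw [hTeq] at hL0'
  have hL0W : span F5 {xx, yy} ≤ W := hL0'.2
  have hxxW : xx ∈ W := hL0W (subset_span (by simp))
  have hyyW : yy ∈ W := hL0W (subset_span (by simp))
  -- a vector of `W` outside `L0`, with first two coordinates zero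
  have hnle : ¬ W ≤ span F5 {xx, yy} := by
    intro hle
    have h2 := Submodule.finrank_mono hle
    rw [hW3, finrank_span_pair_good good_xy] at h2
    omega
  obtain ⟨w, hwW, hwL0⟩ := SetLike.not_le_iff_exists.mp hnle
  have hw1W : w - w 0 • yy - w 1 • xx ∈ W :=
    sub_mem (sub_mem hwW (smul_mem _ _ hyyW)) (smul_mem _ _ hxxW)
  have hw1L0 : w - w 0 • yy - w 1 • xx ∉ span F5 {xx, yy} := by
    intro h
    apply hwL0
    have h2 : w = (w - w 0 • yy - w 1 • xx) + w 0 • yy + w 1 • xx := by abel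
    rw [h2]
    exact add_mem (add_mem h (smul_mem _ _ (subset_span (by simp))))
      (smul_mem _ _ (subset_span (by simp)))
  set w1 : V6 := w - w 0 • yy - w 1 • xx with hw1def
  have hw10 : w1 0 = 0 := by simp [hw1def, xx, yy, Matrix.vecHead, Matrix.vecTail]
  have hw11 : w1 1 = 0 := by simp [hw1def, xx, yy, Matrix.vecHead, Matrix.vecTail]
  -- rescale to a representative
  have hscale : ∀ c : F5, c ≠ 0 → c • w1 ∈ W ∧ c • w1 ∉ span F5 {xx, yy} ∧
      (c • w1) 0 = 0 ∧ (c • w1) 1 = 0 := by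
    intro c hc
    refine ⟨smul_mem _ _ hw1W, ?_, by simp [hw10], by simp [hw11]⟩
    intro h
    apply hw1L0
    have h2 : w1 = c⁻¹ • (c • w1) := by
      rw [smul_smul, inv_mul_cancel₀ hc, one_smul]
    rw [h2]
    exact smul_mem _ _ h
  obtain ⟨w', hw'W, hw'L0, hw'0, hw'1, hrep⟩ :
      ∃ w' : V6, w' ∈ W ∧ w' ∉ span F5 {xx, yy} ∧ w' 0 = 0 ∧ w' 1 = 0 ∧
        IsRepD ![w' 2, w' 3, w' 4, w' 5] := by
    by_cases h2 : w1 2 = 0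
    · by_cases h3 : w1 3 = 0
      · by_cases h4 : w1 4 = 0
        · by_cases h5 : w1 5 = 0
          · exfalso
            apply hw1L0
            have : w1 = 0 := by
              funext i
              fin_cases i
              exacts [hw10, hw11, h2, h3, h4, h5]
            rw [this]; exact zero_mem _
          · obtain ⟨hW', hL0', h0', h1'⟩ := hscale (w1 5)⁻¹ (inv_ne_zero h5)
            refine ⟨(w1 5)⁻¹ • w1, hW', hL0', h0', h1', ?_⟩
            right; right; right
            refine ⟨by simp [h2], by simp [h3], by simp [h4], ?_⟩
            simp only [Matrix.cons_val', Matrix.cons_val_zero, Matrix.cons_val_one,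
              Matrix.head_cons, Pi.smul_apply, smul_eq_mul]
            show (w1 5)⁻¹ * w1 5 = 1
            exact inv_mul_cancel₀ h5
        · obtain ⟨hW', hL0', h0', h1'⟩ := hscale (w1 4)⁻¹ (inv_ne_zero h4)
          refine ⟨(w1 4)⁻¹ • w1, hW', hL0', h0', h1', ?_⟩
          right; right; left
          refine ⟨by simp [h2], by simp [h3], ?_⟩
          show (w1 4)⁻¹ * w1 4 = 1
          exact inv_mul_cancel₀ h4
      · obtain ⟨hW', hL0', h0', h1'⟩ := hscale (w1 3)⁻¹ (inv_ne_zero h3)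
        refine ⟨(w1 3)⁻¹ • w1, hW', hL0', h0', h1', ?_⟩
        right; left
        refine ⟨by simp [h2], ?_⟩
        show (w1 3)⁻¹ * w1 3 = 1
        exact inv_mul_cancel₀ h3
    · obtain ⟨hW', hL0', h0', h1'⟩ := hscale (w1 2)⁻¹ (inv_ne_zero h2)
      refine ⟨(w1 2)⁻¹ • w1, hW', hL0', h0', h1', ?_⟩
      left
      show (w1 2)⁻¹ * w1 2 = 1
      exact inv_mul_cancel₀ h2
  clear hscale hw1L0 hw1W hw10 hw11 hw1def hwW hwL0
  have hw'ne : w' ≠ 0 := fun h => hw'L0 (h ▸ zero_mem _)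
  -- W is spanned by xx, yy, w'
  have hli : LinearIndependent F5 ![xx, yy, w'] := by
    rw [Fintype.linearIndependent_iff]
    intro g hg
    rw [Fin.sum_univ_three] at hg
    simp only [Matrix.cons_val_zero, Matrix.cons_val_one, Matrix.head_cons,
      Matrix.cons_val_two, Matrix.tail_cons] at hg
    by_cases hg2 : g 2 = 0
    · rw [hg2, zero_smul, add_zero] at hg
      have h2 := goodPair_combo_eq_zero good_xy hg
      intro i
      fin_cases i
      exacts [h2.1, h2.2, hg2]
    · exfalso
      apply hw'L0
      rw [mem_span_pair]
      refine ⟨-((g 2)⁻¹ * g 0), -((g 2)⁻¹ * g 1), ?_⟩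
      have hinv : (g 2)⁻¹ * g 2 = 1 := inv_mul_cancel₀ hg2
      funext i
      have hgi := congrFun hg i
      simp only [Pi.add_apply, Pi.smul_apply, smul_eq_mul, Pi.zero_apply] at hgi ⊢
      linear_combination (-(g 2)⁻¹) * hgi + (w' i) * hinv
  have hWspan : span F5 {xx, yy, w'} = W := by
    apply Submodule.eq_of_le_of_finrank_le
    · rw [span_le]
      rintro t ht
      simp only [Set.mem_insert_iff, Set.mem_singleton_iff] at ht
      rcases ht with rfl | rfl | rfl
      exacts [hxxW, hyyW, hw'W]
    · rw [hW3]
      have h1 : span F5 ({xx, yy, w'} : Set V6) = span F5 (Set.range ![xx, yy, w']) := by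
        rw [range_triple]
      rw [h1, finrank_span_eq_card hli]
      simp
  -- the parameterization of candidate lines in `W`
  have hXW : ∀ a : F5, xx - a • w' ∈ W := fun a => sub_mem hxxW (smul_mem _ _ hw'W)
  have hYW : ∀ b : F5, yy - b • w' ∈ W := fun b => sub_mem hyyW (smul_mem _ _ hw'W)
  have hX0 : ∀ a : F5, (xx - a • w') 0 = 0 := by intro a; simp [xx, hw'0]
  have hX1 : ∀ a : F5, (xx - a • w') 1 = 1 := by intro a; simp [xx, hw'1]
  have hY0 : ∀ b : F5, (yy - b • w') 0 = 1 := by intro b; simp [yy, hw'0]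
  have hY1 : ∀ b : F5, (yy - b • w') 1 = 0 := by intro b; simp [yy, hw'1]
  have hinj : Function.Injective
      (fun p : F5 × F5 => span F5 {xx - p.1 • w', yy - p.2 • w'}) := by
    intro p p' hpp
    simp only at hpp
    have hXm : xx - p'.1 • w' ∈ span F5 {xx - p.1 • w', yy - p.2 • w'} :=
      hpp ▸ subset_span (by simp)
    have hYm : yy - p'.2 • w' ∈ span F5 {xx - p.1 • w', yy - p.2 • w'} :=
      hpp ▸ subset_span (by simp)
    obtain ⟨al, be, hab⟩ := mem_span_pair.mp hXm
    have e0 := congrFun hab 0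
    have e1 := congrFun hab 1
    simp only [Pi.add_apply, Pi.smul_apply, smul_eq_mul, hX0, hX1, hY0, hY1] at e0 e1
    rw [mul_zero, mul_one, zero_add] at e0
    rw [mul_one, mul_zero, add_zero] at e1
    -- e0 : be = 0, e1 : al = 1
    rw [e0, e1, one_smul, zero_smul, add_zero] at hab
    have h1 : p.1 = p'.1 := by
      have h2 : p.1 • w' = p'.1 • w' := sub_right_inj.mp hab
      exact smul_left_injective F5 hw'ne h2
    obtain ⟨al', be', hab'⟩ := mem_span_pair.mp hYm
    have f0 := congrFun hab' 0
    have f1 := congrFun hab' 1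
    simp only [Pi.add_apply, Pi.smul_apply, smul_eq_mul, hX0, hX1, hY0, hY1] at f0 f1
    rw [mul_zero, mul_one, zero_add] at f0
    rw [mul_one, mul_zero, add_zero] at f1
    -- f0 : be' = 1, f1 : al' = 0
    rw [f0, f1, one_smul, zero_smul, zero_add] at hab'
    have h2 : p.2 = p'.2 := by
      have h3 : p.2 • w' = p'.2 • w' := sub_right_inj.mp hab'
      exact smul_left_injective F5 hw'ne h3
    exact Prod.ext h1 h2
  have hTeq2 : T = (fun p : F5 × F5 => span F5 {xx - p.1 • w', yy - p.2 • w'}) ''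
      {p : F5 × F5 | GoodPair (xx - p.1 • w') (yy - p.2 • w')} := by
    apply Set.eq_of_subset_of_subset
    · intro L hL
      rw [hTeq] at hL
      obtain ⟨⟨x, y, hxy, rfl⟩, hLW⟩ := hL
      have hxW : x ∈ span F5 {xx, yy, w'} := hWspan ▸ hLW (subset_span (by simp))
      have hyW : y ∈ span F5 {xx, yy, w'} := hWspan ▸ hLW (subset_span (by simp))
      obtain ⟨s0, s1, s2, hx⟩ := mem_span_triple.mp hxW
      obtain ⟨t0, t1, t2, hy⟩ := mem_span_triple.mp hyW
      have hx0 : x 0 = s1 := by rw [hx]; simp [xx, yy, hw'0]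
      have hx1 : x 1 = s0 := by rw [hx]; simp [xx, yy, hw'1]
      have hy0 : y 0 = t1 := by rw [hy]; simp [xx, yy, hw'0]
      have hy1 : y 1 = t0 := by rw [hy]; simp [xx, yy, hw'1]
      have hD : s0 * t1 - s1 * t0 ≠ 0 := by
        intro h0
        have h2 := hxy 0 1 (by decide)
        rw [hx0, hx1, hy0, hy1] at h2
        exact h2 (sub_eq_zero.mp h0).symm
      have hinv : (s0 * t1 - s1 * t0)⁻¹ * (s0 * t1 - s1 * t0) = 1 := inv_mul_cancel₀ hD
      set Di : F5 := (s0 * t1 - s1 * t0)⁻¹ with hDi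
      have key1 : xx - ((Di * (s1 * t2 - t1 * s2))) • w' =
          (Di * t1) • x + (-(Di * s1)) • y := by
        funext i
        have hxi := congrFun hx i
        have hyi := congrFun hy i
        simp only [Pi.add_apply, Pi.sub_apply, Pi.smul_apply, smul_eq_mul] at hxi hyi ⊢
        linear_combination (-(Di * t1)) * hxi + (Di * s1) * hyi - (xx i) * hinv
      have key2 : yy - ((Di * (t0 * s2 - s0 * t2))) • w' =
          (-(Di * t0)) • x + (Di * s0) • y := by
        funext i
        have hxi := congrFun hx i
        have hyi := congrFun hy i
        simp only [Pi.add_apply, Pi.sub_apply, Pi.smul_apply, smul_eq_mul] at hxi hyi ⊢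
        linear_combination (Di * t0) * hxi + (-(Di * s0)) * hyi - (yy i) * hinv
      have hgood : GoodPair (xx - (Di * (s1 * t2 - t1 * s2)) • w')
          (yy - (Di * (t0 * s2 - s0 * t2)) • w') := by
        rw [key1, key2]
        apply goodPair_smul_combo hxy
        have h3 : Di * t1 * (Di * s0) - -(Di * s1) * -(Di * t0) = Di := by
          rw [hDi]
          linear_combination (s0 * t1 - s1 * t0)⁻¹ * hinv
        rw [h3, hDi]
        exact inv_ne_zero hD
      have hspan : span F5 {xx - (Di * (s1 * t2 - t1 * s2)) • w',
          yy - (Di * (t0 * s2 - s0 * t2)) • w'} = span F5 {x, y} := by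
        apply le_antisymm
        · rw [span_le]
          rintro t ht
          simp only [Set.mem_insert_iff, Set.mem_singleton_iff] at ht
          rcases ht with rfl | rfl
          · rw [key1]
            exact add_mem (smul_mem _ _ (subset_span (by simp)))
              (smul_mem _ _ (subset_span (by simp)))
          · rw [key2]
            exact add_mem (smul_mem _ _ (subset_span (by simp)))
              (smul_mem _ _ (subset_span (by simp)))
        · rw [span_le]
          rintro t ht
          simp only [Set.mem_insert_iff, Set.mem_singleton_iff] at ht
          rcases ht with rfl | rfl
          · have keyx : t = s0 • (xx - (Di * (s1 * t2 - t1 * s2)) • w') +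
                s1 • (yy - (Di * (t0 * s2 - s0 * t2)) • w') := by
              rw [key1, key2]
              funext i
              have hxi := congrFun hx i
              have hyi := congrFun hy i
              simp only [Pi.add_apply, Pi.sub_apply, Pi.smul_apply, smul_eq_mul] at hxi hyi ⊢
              linear_combination (-(t i)) * hinv
            rw [keyx]
            exact add_mem (smul_mem _ _ (subset_span (by simp)))
              (smul_mem _ _ (subset_span (by simp)))
          · have keyy : t = t0 • (xx - (Di * (s1 * t2 - t1 * s2)) • w') +
                t1 • (yy - (Di * (t0 * s2 - s0 * t2)) • w') := by
              rw [key1, key2]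
              funext i
              have hxi := congrFun hx i
              have hyi := congrFun hy i
              simp only [Pi.add_apply, Pi.sub_apply, Pi.smul_apply, smul_eq_mul] at hxi hyi ⊢
              linear_combination (-(t i)) * hinv
            rw [keyy]
            exact add_mem (smul_mem _ _ (subset_span (by simp)))
              (smul_mem _ _ (subset_span (by simp)))
      exact ⟨(Di * (s1 * t2 - t1 * s2), Di * (t0 * s2 - s0 * t2)), hgood, hspan⟩
    · rintro L ⟨p, hp, rfl⟩
      rw [hTeq]
      refine ⟨⟨_, _, hp, rfl⟩, ?_⟩
      rw [span_le]
      rintro t ht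
      simp only [Set.mem_insert_iff, Set.mem_singleton_iff] at ht
      rcases ht with rfl | rfl
      exacts [hXW _, hYW _]
  have hcnt : T.ncard = cnt w' := by
    rw [hTeq2, Set.ncard_image_of_injective _ hinj]
    have hset : {p : F5 × F5 | GoodPair (xx - p.1 • w') (yy - p.2 • w')} =
        ↑(Finset.univ.filter (fun p : F5 × F5 =>
          Good2 (xx - p.1 • w') (yy - p.2 • w'))) := by
      ext p
      simp [good2_iff]
    rw [hset, Set.ncard_coe_finset]
    rfl
  have hwvec : (![0, 0, w' 2, w' 3, w' 4, w' 5] : V6) = w' := by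
    funext i
    fin_cases i
    · exact hw'0.symm
    · exact hw'1.symm
    all_goals rfl
  have hcore := coreLemma ![w' 2, w' 3, w' 4, w' 5] hrep
  simp only [Matrix.cons_val_zero, Matrix.cons_val_one, Matrix.head_cons,
    Matrix.cons_val_two, Matrix.tail_cons, Matrix.cons_val_three,
    Matrix.cons_val_fin_one] at hcore
  rw [hwvec] at hcore
  rw [hcnt]
  rcases hcore with h | h | h
  · -- |T| = 1 : the clique can be extended, contradicting maximality
    exfalso
    have hT1 : T.ncard = 1 := by rw [hcnt, h]
    obtain ⟨A, hA⟩ := Set.ncard_eq_one.mp hT1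
    have hAL0 : A = span F5 {xx, yy} := by
      have := hL0
      rw [hA] at this
      exact (Set.mem_singleton_iff.mp this).symm
    refine not_max ⟨hmem, hadj⟩ hmax (span F5 {xx, yy}) hL0 ?_ xx (Or.inl rfl) ?_
    · intro t ht
      rw [hA, hAL0] at ht
      rw [Set.mem_singleton_iff.mp ht]
      exact Set.mem_insert _ _
    · exact ⟨subset_span (by simp), subset_span (by simp)⟩
  · -- |T| = 2 : again extendable, contradiction
    exfalso
    have hT2 : T.ncard = 2 := by rw [hcnt, h]
    obtain ⟨A, B, hAB, hT2'⟩ := Set.ncard_eq_two.mp hT2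
    -- identify T = {span {xx,yy}, L1}
    obtain ⟨L1, hL1mem, hL1ne, hsub⟩ :
        ∃ L1, L1 ∈ T ∧ span F5 {xx, yy} ≠ L1 ∧ T ⊆ {span F5 {xx, yy}, L1} := by
      have hmemp := hL0
      rw [hT2'] at hmemp
      rcases hmemp with rfl | hB
      · refine ⟨B, by rw [hT2']; exact Set.mem_insert_iff.mpr (Or.inr rfl), hAB, ?_⟩
        rw [hT2']
      · rw [Set.mem_singleton_iff] at hB
        subst hB
        refine ⟨A, by rw [hT2']; exact Set.mem_insert _ _, Ne.symm hAB, ?_⟩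
        rw [hT2']
        intro t ht
        rcases ht with rfl | ht
        · exact Set.mem_insert_iff.mpr (Or.inr rfl)
        · rw [Set.mem_singleton_iff.mp ht]
          exact Set.mem_insert _ _
    have hfr1 := hadj _ hL0 _ hL1mem hL1ne
    have hnebot : span F5 {xx, yy} ⊓ L1 ≠ ⊥ := by
      intro hb
      rw [hb, finrank_bot] at hfr1
      omega
    obtain ⟨v, hv, hv0⟩ := Submodule.exists_mem_ne_zero_of_ne_bot hnebot
    obtain ⟨pp, qq, hpq⟩ := mem_span_pair.mp (Submodule.mem_inf.mp hv).1
    by_cases hq : qq = 0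
    · have hp : pp ≠ 0 := by
        rintro rfl
        rw [hq] at hpq
        simp only [zero_smul, add_zero] at hpq
        exact hv0 hpq.symm
      have hxxv : xx = pp⁻¹ • v := by
        rw [← hpq, hq, zero_smul, add_zero, smul_smul, inv_mul_cancel₀ hp, one_smul]
      refine not_max ⟨hmem, hadj⟩ hmax L1 hL1mem hsub xx (Or.inl rfl) ?_
      have h9 : pp⁻¹ • v ∈ span F5 {xx, yy} ⊓ L1 := smul_mem _ _ hv
      rwa [← hxxv] at h9
    · have hu' : (qq⁻¹ * pp) • xx + yy = qq⁻¹ • v := by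
        rw [← hpq, smul_add, smul_smul, smul_smul, inv_mul_cancel₀ hq, one_smul]
      have huin : (qq⁻¹ * pp) • xx + yy ∈ span F5 {xx, yy} ⊓ L1 := by
        rw [hu']
        exact smul_mem _ _ hv
      rcases (by decide : ∀ c : F5, c = 0 ∨ c = 1 ∨ c = 2 ∨ c = 3 ∨ c = 4)
          (qq⁻¹ * pp) with ht | ht | ht | ht | ht <;> rw [ht] at huin
      · refine not_max ⟨hmem, hadj⟩ hmax L1 hL1mem hsub yy (Or.inr (Or.inl rfl)) ?_
        have : (0 : F5) • xx + yy = yy := by rw [zero_smul, zero_add]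
        rwa [this] at huin
      · refine not_max ⟨hmem, hadj⟩ hmax L1 hL1mem hsub uu1
          (Or.inr (Or.inr (Or.inl rfl))) ?_
        have : (1 : F5) • xx + yy = uu1 := by decide
        rwa [this] at huin
      · refine not_max ⟨hmem, hadj⟩ hmax L1 hL1mem hsub uu2
          (Or.inr (Or.inr (Or.inr (Or.inl rfl)))) ?_
        have : (2 : F5) • xx + yy = uu2 := by decide
        rwa [this] at huin
      · refine not_max ⟨hmem, hadj⟩ hmax L1 hL1mem hsub uu3
          (Or.inr (Or.inr (Or.inr (Or.inr (Or.inl rfl))))) ?_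
        have : (3 : F5) • xx + yy = uu3 := by decide
        rwa [this] at huin
      · refine not_max ⟨hmem, hadj⟩ hmax L1 hL1mem hsub uu4
          (Or.inr (Or.inr (Or.inr (Or.inr (Or.inr rfl))))) ?_
        have : (4 : F5) • xx + yy = uu4 := by decide
        rwa [this] at huin
  · exact h

/-! ### Monomial transformations -/

def monFun (mu : Fin 6 → F5) (tau : Equiv.Perm (Fin 6)) : V6 → V6 :=
  fun v i => mu i * v (tau i)

def monLin (mu : Fin 6 → F5) (tau : Equiv.Perm (Fin 6)) : V6 →ₗ[F5] V6 where
  toFun := monFun mu tau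
  map_add' := by intro a b; funext i; simp [monFun, mul_add]
  map_smul' := by intro c a; funext i; simp [monFun]; ring

def monEquiv (mu : Fin 6 → F5) (hmu : ∀ i, mu i ≠ 0) (tau : Equiv.Perm (Fin 6)) :
    V6 ≃ₗ[F5] V6 :=
  LinearEquiv.ofLinear (monLin mu tau)
    (monLin (fun j => (mu (tau.symm j))⁻¹) tau.symm)
    (by
      apply LinearMap.ext; intro v; funext i
      simp only [LinearMap.coe_comp, Function.comp_apply, LinearMap.id_coe, id_eq]
      show mu i * ((mu (tau.symm (tau i)))⁻¹ * v (tau.symm (tau i))) = v i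
      rw [Equiv.symm_apply_apply, ← mul_assoc, mul_inv_cancel₀ (hmu i), one_mul])
    (by
      apply LinearMap.ext; intro v; funext j
      simp only [LinearMap.coe_comp, Function.comp_apply, LinearMap.id_coe, id_eq]
      show (mu (tau.symm j))⁻¹ * (mu (tau.symm j) * v (tau (tau.symm j))) = v j
      rw [Equiv.apply_symm_apply, ← mul_assoc, inv_mul_cancel₀ (hmu _), one_mul])

lemma goodPair_mon {mu : Fin 6 → F5} (hmu : ∀ i, mu i ≠ 0) (tau : Equiv.Perm (Fin 6))
    {x y : V6} (h : GoodPair x y) : GoodPair (monFun mu tau x) (monFun mu tau y) := by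
  intro i j hij heq
  apply h (tau i) (tau j) (fun he => hij (tau.injective he))
  have h2 : (mu i * mu j) * (x (tau i) * y (tau j)) =
      (mu i * mu j) * (x (tau j) * y (tau i)) := by
    simp only [monFun] at heq
    linear_combination heq
  exact mul_left_cancel₀ (mul_ne_zero (hmu i) (hmu j)) h2

lemma map_span_pair (e : V6 ≃ₗ[F5] V6) (x y : V6) :
    Submodule.map (e : V6 →ₗ[F5] V6) (span F5 {x, y}) = span F5 {e x, e y} := by
  rw [Submodule.map_span]
  congr 1
  rw [Set.image_insert_eq, Set.image_singleton]
  rfl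

lemma isSimplexLine_map (e : V6 ≃ₗ[F5] V6)
    (hgood : ∀ x y : V6, GoodPair x y → GoodPair (e x) (e y))
    {L : Submodule F5 V6} (h : IsSimplexLine L) :
    IsSimplexLine (Submodule.map (e : V6 →ₗ[F5] V6) L) := by
  obtain ⟨x, y, hxy, rfl⟩ := h
  rw [map_span_pair]
  exact ⟨e x, e y, hgood x y hxy, rfl⟩

lemma monEquiv_good (mu : Fin 6 → F5) (hmu : ∀ i, mu i ≠ 0) (tau : Equiv.Perm (Fin 6)) :
    ∀ x y : V6, GoodPair x y → GoodPair ((monEquiv mu hmu tau) x) ((monEquiv mu hmu tau) y) :=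
  fun x y h => goodPair_mon hmu tau h

lemma monEquiv_symm_good (mu : Fin 6 → F5) (hmu : ∀ i, mu i ≠ 0) (tau : Equiv.Perm (Fin 6)) :
    ∀ x y : V6, GoodPair x y →
      GoodPair ((monEquiv mu hmu tau).symm x) ((monEquiv mu hmu tau).symm y) :=
  fun x y h =>
    goodPair_mon (mu := fun j => (mu (tau.symm j))⁻¹) (fun j => inv_ne_zero (hmu _)) tau.symm h

/-! ### Transport of tops along a linear automorphism -/

lemma top_pullback (e : V6 ≃ₗ[F5] V6)
    (hge : ∀ x y : V6, GoodPair x y → GoodPair (e x) (e y))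
    (hgs : ∀ x y : V6, GoodPair x y → GoodPair (e.symm x) (e.symm y))
    (T : Set (Submodule F5 V6)) (hT : IsGammaTop T) :
    IsGammaTop ((fun L => Submodule.map (e : V6 →ₗ[F5] V6) L) ⁻¹' T) ∧
      ((fun L => Submodule.map (e : V6 →ₗ[F5] V6) L) ⁻¹' T).ncard = T.ncard := by
  obtain ⟨⟨hmem, hadj⟩, hmax, W, hW3, hTeq⟩ := hT
  have hback : ∀ L : Submodule F5 V6,
      Submodule.map (e.symm : V6 →ₗ[F5] V6) (Submodule.map (e : V6 →ₗ[F5] V6) L) = L := by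
    intro L
    rw [← Submodule.map_comp]
    have h2 : (e.symm : V6 →ₗ[F5] V6).comp (e : V6 →ₗ[F5] V6) = LinearMap.id := by
      apply LinearMap.ext; intro v
      simp
    rw [h2, Submodule.map_id]
  have h2back : ∀ L : Submodule F5 V6,
      Submodule.map (e : V6 →ₗ[F5] V6) (Submodule.map (e.symm : V6 →ₗ[F5] V6) L) = L := by
    intro L
    rw [← Submodule.map_comp]
    have h2 : (e : V6 →ₗ[F5] V6).comp (e.symm : V6 →ₗ[F5] V6) = LinearMap.id := by
      apply LinearMap.ext; intro v
      simp
    rw [h2, Submodule.map_id]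
  have hinj : Function.Injective (fun L => Submodule.map (e : V6 →ₗ[F5] V6) L) := by
    intro A B hAB
    have := congrArg (Submodule.map (e.symm : V6 →ₗ[F5] V6)) hAB
    rwa [hback, hback] at this
  have hfr : ∀ L : Submodule F5 V6,
      finrank F5 ↥(Submodule.map (e : V6 →ₗ[F5] V6) L) = finrank F5 ↥L := fun L =>
    LinearEquiv.finrank_map_eq e L
  have hfrs : ∀ L : Submodule F5 V6,
      finrank F5 ↥(Submodule.map (e.symm : V6 →ₗ[F5] V6) L) = finrank F5 ↥L := fun L =>
    LinearEquiv.finrank_map_eq e.symm L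
  have hminf : ∀ A B : Submodule F5 V6, Submodule.map (e : V6 →ₗ[F5] V6) (A ⊓ B) =
      Submodule.map (e : V6 →ₗ[F5] V6) A ⊓ Submodule.map (e : V6 →ₗ[F5] V6) B :=
    fun A B => Submodule.map_inf _ e.injective
  have hsimpl : ∀ L : Submodule F5 V6,
      IsSimplexLine (Submodule.map (e : V6 →ₗ[F5] V6) L) ↔ IsSimplexLine L := by
    intro L
    constructor
    · intro h
      have h2 := isSimplexLine_map e.symm hgs h
      rwa [hback] at h2
    · exact isSimplexLine_map e hge
  constructor
  · refine ⟨⟨fun L hL => (hsimpl L).mp (hmem _ hL), fun A hA B hB hAB => ?_⟩, ?_, ?_⟩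
    · have h2 := hadj _ hA _ hB (fun h => hAB (hinj h))
      rw [← hminf] at h2
      rw [← hfr (A ⊓ B)]
      exact h2
    · -- maximality
      intro T'' hclq'' hsub''
      have hclqim : IsGammaClique ((fun L => Submodule.map (e : V6 →ₗ[F5] V6) L) '' T'') := by
        constructor
        · rintro L ⟨A, hA, rfl⟩
          exact (hsimpl A).mpr (hclq''.1 A hA)
        · rintro L ⟨A, hA, rfl⟩ L' ⟨B, hB, rfl⟩ hLL'
          rw [← hminf, hfr]
          exact hclq''.2 A hA B hB (fun h => hLL' (h ▸ rfl))
      have hTsub : T ⊆ (fun L => Submodule.map (e : V6 →ₗ[F5] V6) L) '' T'' := by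
        intro t ht
        refine ⟨Submodule.map (e.symm : V6 →ₗ[F5] V6) t, hsub'' ?_, h2back t⟩
        show Submodule.map (e : V6 →ₗ[F5] V6) _ ∈ T
        rw [h2back]
        exact ht
      have him := hmax _ hclqim hTsub
      apply Set.eq_of_subset_of_subset _ hsub''
      intro A hA
      show Submodule.map (e : V6 →ₗ[F5] V6) A ∈ T
      rw [← him]
      exact ⟨A, hA, rfl⟩
    · refine ⟨Submodule.map (e.symm : V6 →ₗ[F5] V6) W, by rw [hfrs]; exact hW3, ?_⟩
      ext L
      constructor
      · intro hL
        have hL' := hL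
        rw [Set.mem_preimage, hTeq] at hL'
        obtain ⟨hsim, hle⟩ := hL'
        refine ⟨(hsimpl L).mp hsim, ?_⟩
        have h2 := Submodule.map_mono (f := (e.symm : V6 →ₗ[F5] V6)) hle
        rwa [hback] at h2
      · rintro ⟨hsim, hle⟩
        rw [Set.mem_preimage, hTeq]
        refine ⟨(hsimpl L).mpr hsim, ?_⟩
        have h2 := Submodule.map_mono (f := (e : V6 →ₗ[F5] V6)) hle
        rwa [h2back] at h2
  · have hsurj : Function.Surjective (fun L => Submodule.map (e : V6 →ₗ[F5] V6) L) :=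
      fun p => ⟨Submodule.map (e.symm : V6 →ₗ[F5] V6) p, h2back p⟩
    conv_rhs => rw [← Set.image_preimage_eq T hsurj]
    rw [Set.ncard_image_of_injective _ hinj]

/-! ### Normalizing a simplex line to the standard one -/

def idx (c : F5) : Fin 6 := ⟨c.val + 1, by have := ZMod.val_lt c; omega⟩

lemma xx_idx : ∀ c : F5, xx (idx c) = 1 := by decide
lemma yy_idx : ∀ c : F5, yy (idx c) = c := by decide
lemma idx_ne_zero : ∀ c : F5, idx c ≠ 0 := by decide
lemma idx_inj : ∀ c c' : F5, idx c = idx c' → c = c' := by decide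

lemma exists_mon_map (x y : V6) (hxy : GoodPair x y) :
    ∃ (mu : Fin 6 → F5) (hmu : ∀ i, mu i ≠ 0) (tau : Equiv.Perm (Fin 6)),
      (monEquiv mu hmu tau) xx = x ∧ (monEquiv mu hmu tau) yy = y := by
  set mu : Fin 6 → F5 := fun i => if x i = 0 then y i else x i with hmu_def
  have hmu : ∀ i, mu i ≠ 0 := by
    intro i
    by_cases hxi : x i = 0
    · simp only [hmu_def, if_pos hxi]
      intro hyi
      have hji : (if i = 0 then (1 : Fin 6) else 0) ≠ i := by
        by_cases h : i = 0
        · subst h; simp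
        · simp only [if_neg h]; exact fun he => h he.symm
      exact hxy i _ (Ne.symm hji) (by rw [hxi, hyi]; ring)
    · simp only [hmu_def, if_neg hxi]; exact hxi
  set tf : Fin 6 → Fin 6 := fun i => if x i = 0 then 0 else idx (y i * (x i)⁻¹) with htf
  have hinj : Function.Injective tf := by
    intro i j hij
    by_cases hxi : x i = 0 <;> by_cases hxj : x j = 0
    · by_contra hne
      exact hxy i j hne (by rw [hxi, hxj]; ring)
    · rw [htf] at hij; simp only [if_pos hxi, if_neg hxj] at hij
      exact absurd hij.symm (idx_ne_zero _)
    · rw [htf] at hij; simp only [if_neg hxi, if_pos hxj] at hij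
      exact absurd hij (idx_ne_zero _)
    · rw [htf] at hij; simp only [if_neg hxi, if_neg hxj] at hij
      have hc := idx_inj _ _ hij
      by_contra hne
      apply hxy i j hne
      field_simp at hc
      linear_combination -hc
  refine ⟨mu, hmu, Equiv.ofBijective tf (Finite.injective_iff_bijective.mp hinj), ?_, ?_⟩
  · funext i
    show mu i * xx (tf i) = x i
    by_cases hxi : x i = 0
    · simp only [htf, if_pos hxi]
      rw [show xx 0 = 0 from rfl, mul_zero, hxi]
    · simp only [htf, if_neg hxi]
      rw [xx_idx, mul_one]
      simp only [hmu_def, if_neg hxi]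
  · funext i
    show mu i * yy (tf i) = y i
    by_cases hxi : x i = 0
    · simp only [htf, if_pos hxi]
      rw [show yy 0 = 1 from rfl, mul_one]
      simp only [hmu_def, if_pos hxi]
    · simp only [htf, if_neg hxi]
      rw [yy_idx]
      simp only [hmu_def, if_neg hxi]
      field_simp

end SimplexTop

/-- For q = 5, every top of Γ contains precisely 4 simplex lines. -/
theorem top_has_four_lines (T : Set (Submodule (ZMod 5) (Fin 6 → ZMod 5)))
    (hT : IsGammaTop T) : T.ncard = 4 := by
  obtain ⟨⟨hmem, hadj⟩, hmax, W, hW3, hTeq⟩ := hT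
  have hne : T.Nonempty := by
    rcases Set.eq_empty_or_nonempty T with h | h
    · exfalso
      have hclq1 : IsGammaClique
          {span (ZMod 5) ({SimplexTop.xx, SimplexTop.yy} : Set (Fin 6 → ZMod 5))} := by
        constructor
        · rintro L hL
          rw [Set.mem_singleton_iff] at hL; subst hL
          exact ⟨_, _, SimplexTop.good_xy, rfl⟩
        · intro L hL L' hL' hne
          rw [Set.mem_singleton_iff] at hL hL'
          subst hL; subst hL'
          exact absurd rfl hne
      have h2 := hmax _ hclq1 (by rw [h]; exact Set.empty_subset _)
      rw [h] at h2
      exact Set.singleton_ne_empty _ h2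
    · exact h
  obtain ⟨L1, hL1⟩ := hne
  obtain ⟨x, y, hxy, hL1eq⟩ := hmem L1 hL1
  obtain ⟨mu, hmu, tau, hex, hey⟩ := SimplexTop.exists_mon_map x y hxy
  have hmapL0 : Submodule.map
      ((SimplexTop.monEquiv mu hmu tau : _ ≃ₗ[ZMod 5] _) : _ →ₗ[ZMod 5] _)
      (span (ZMod 5) {SimplexTop.xx, SimplexTop.yy}) = L1 := by
    rw [SimplexTop.map_span_pair, hex, hey]
    exact hL1eq.symm
  obtain ⟨hTop2, hncard⟩ := SimplexTop.top_pullback (SimplexTop.monEquiv mu hmu tau)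
    (SimplexTop.monEquiv_good _ _ _) (SimplexTop.monEquiv_symm_good _ _ _) T
    ⟨⟨hmem, hadj⟩, hmax, W, hW3, hTeq⟩
  obtain ⟨hclq2, hmax2, W2, hW32, hTeq2⟩ := hTop2
  rw [← hncard]
  apply SimplexTop.main_norm _ hclq2 hmax2 W2 hW32 hTeq2
  show Submodule.map _ _ ∈ T
  rw [hmapL0]
  exact hL1
end

section
/- Let q be a prime power. Two distinct simplex points P = ⟨x⟩ and Q = ⟨y⟩ in F^(q+1) are collinear if and only if the simplex points I(P) = ⟨I(x)⟩ and I(Q) = ⟨I(y)⟩ are collinear. -/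
open Submodule Module

lemma goodPair_vecInv {F : Type} [Field F] {n : ℕ} {x y : Fin n → F}
    (h : GoodPair x y) : GoodPair (vecInv x) (vecInv y) := by
  intro i j hij heq
  exact h i j hij (inv_injective (by rw [mul_inv, mul_inv]; exact heq))

lemma vecInv_vecInv {F : Type} [Field F] {n : ℕ} (x : Fin n → F) :
    vecInv (vecInv x) = x := funext fun i => inv_inv _

lemma goodPair_smul {F : Type} [Field F] {n : ℕ} {x y : Fin n → F} {c d : F}
    (hc : c ≠ 0) (hd : d ≠ 0) (h : GoodPair x y) : GoodPair (c • x) (d • y) := by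
  intro i j hij heq
  apply h i j hij
  apply mul_left_cancel₀ (mul_ne_zero hc hd)
  simp only [Pi.smul_apply, smul_eq_mul] at heq
  linear_combination heq

lemma ptCollinear_iff_goodPair {F : Type} [Field F] {n : ℕ} {x y : Fin n → F}
    (hx : x ≠ 0) (hy : y ≠ 0) :
    PtCollinear (span F {x}) (span F {y}) ↔ GoodPair x y := by
  constructor
  · rintro ⟨x', y', h, hX, hY⟩
    have hxm : x ∈ span F {x'} := by rw [← hX]; exact mem_span_singleton_self x
    have hym : y ∈ span F {y'} := by rw [← hY]; exact mem_span_singleton_self y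
    obtain ⟨c, hc⟩ := mem_span_singleton.mp hxm
    obtain ⟨d, hd⟩ := mem_span_singleton.mp hym
    have hc0 : c ≠ 0 := by rintro rfl; rw [zero_smul] at hc; exact hx hc.symm
    have hd0 : d ≠ 0 := by rintro rfl; rw [zero_smul] at hd; exact hy hd.symm
    rw [← hc, ← hd]
    exact goodPair_smul hc0 hd0 h
  · intro h
    exact ⟨x, y, h, rfl, rfl⟩

lemma exists_coord_ne_zero {F : Type} [Field F] [Fintype F]
    {x : Fin (Fintype.card F + 1) → F} (hx : ∃! i, x i = 0) : ∃ j, x j ≠ 0 := by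
  obtain ⟨i0, _, hu⟩ := hx
  have h2 : 1 ≤ Fintype.card F := Fintype.card_pos
  have : ∃ j : Fin (Fintype.card F + 1), j ≠ i0 := by
    by_cases h0 : i0.val = 0
    · exact ⟨⟨1, by omega⟩, by intro h; rw [← h] at h0; simp at h0⟩
    · exact ⟨⟨0, by omega⟩, by intro h; rw [← h] at h0; simp at h0⟩
  obtain ⟨j, hj⟩ := this
  exact ⟨j, fun h => hj (hu j h)⟩

/-- Distinct simplex points P = ⟨x⟩, Q = ⟨y⟩ are collinear iff I(P) = ⟨I(x)⟩ and
I(Q) = ⟨I(y)⟩ are collinear. -/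
theorem collinear_iff_inv_collinear (F : Type) [Field F] [Fintype F]
    (x y : Fin (Fintype.card F + 1) → F)
    (hx : ∃! i, x i = 0) (hy : ∃! i, y i = 0)
    (hne : span F {x} ≠ span F {y}) :
    PtCollinear (span F {x}) (span F {y}) ↔
      PtCollinear (span F {vecInv x}) (span F {vecInv y}) := by
  obtain ⟨jx, hjx⟩ := exists_coord_ne_zero hx
  obtain ⟨jy, hjy⟩ := exists_coord_ne_zero hy
  have hx0 : x ≠ 0 := fun h => hjx (by rw [h]; rfl)
  have hy0 : y ≠ 0 := fun h => hjy (by rw [h]; rfl)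
  have hix0 : vecInv x ≠ 0 := fun h => (inv_ne_zero hjx) (congrFun h jx)
  have hiy0 : vecInv y ≠ 0 := fun h => (inv_ne_zero hjy) (congrFun h jy)
  rw [ptCollinear_iff_goodPair hx0 hy0, ptCollinear_iff_goodPair hix0 hiy0]
  constructor
  · exact goodPair_vecInv
  · intro h
    have := goodPair_vecInv h
    rwa [vecInv_vecInv, vecInv_vecInv] at this
end

section
/- Let q ≥ 5 be a prime power. For any three mutually distinct 1-dimensional subspaces P₁, P₂, P₃ contained in a common simplex line, the points I(P₁), I(P₂), I(P₃) span a 3-dimensional subspace of F^(q+1) (i.e., they span a projective plane). -/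
open Submodule Module

/-! Write the three points as `aₖ x + bₖ y`, where `x, y` generate the simplex line; coordinate `i`
of the `k`-th point is the linear form `ℓₖ = aₖ s + bₖ t` at the column `(s, t) = (xᵢ, yᵢ)`.
Clearing denominators in a relation `∑ cₖ ℓₖ⁻¹ = 0` shows that the binary quadratic form
`c₀ ℓ₁ℓ₂ + c₁ ℓ₀ℓ₂ + c₂ ℓ₀ℓ₁` vanishes at every column where no `ℓₖ` vanishes. Each `ℓₖ` vanishes at
most at one column, so with `q + 1 ≥ 6` columns the form has three pairwise non-proportional zeros
and is therefore zero. Since the `ℓₖ` are pairwise non-proportional, the products `ℓ₁ℓ₂, ℓ₀ℓ₂, ℓ₀ℓ₁`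
are linearly independent, which forces `c = 0`. -/

section

variable {F : Type} [Field F]

theorem GoodPair.comp {m n : ℕ} {x y : Fin n → F} (h : GoodPair x y) {e : Fin m → Fin n}
    (he : Function.Injective e) : GoodPair (x ∘ e) (y ∘ e) :=
  fun i j hij => h (e i) (e j) (he.ne hij)

theorem GoodPair.ne_zero_or_ne_zero {n : ℕ} [Nontrivial (Fin n)] {x y : Fin n → F}
    (h : GoodPair x y) (i : Fin n) : x i ≠ 0 ∨ y i ≠ 0 := by
  obtain ⟨j, hj⟩ := exists_ne i
  by_contra! hxy
  exact h i j hj.symm (by simp [hxy.1, hxy.2])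

theorem GoodPair.subsingleton_setOf_add_eq_zero {n : ℕ} {x y : Fin n → F} (h : GoodPair x y)
    {a b : F} (hab : a ≠ 0 ∨ b ≠ 0) : {i | a * x i + b * y i = 0}.Subsingleton := by
  intro i (hi : a * x i + b * y i = 0) j (hj : a * x j + b * y j = 0)
  by_contra hij
  have hdet := sub_ne_zero.2 (h i j hij)
  have ha : a * (x i * y j - x j * y i) = 0 := by linear_combination y j * hi - y i * hj
  have hb : b * (x i * y j - x j * y i) = 0 := by linear_combination x i * hj - x j * hi
  rcases hab with hab | hab
  · exact hab ((mul_eq_zero.1 ha).resolve_right hdet)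
  · exact hab ((mul_eq_zero.1 hb).resolve_right hdet)

theorem goodPair_fin_three {a b : Fin 3 → F} (h01 : a 0 * b 1 ≠ a 1 * b 0)
    (h02 : a 0 * b 2 ≠ a 2 * b 0) (h12 : a 1 * b 2 ≠ a 2 * b 1) : GoodPair a b := by
  intro i j hij
  fin_cases i <;> fin_cases j
  all_goals first | exact absurd rfl hij | assumption | exact Ne.symm ‹_›

/-- Row `j` evaluates the binary quadratic form `q₀ s² + q₁ s t + q₂ t²` at `(s j, t j)`. -/
def quadEvalMatrix (s t : Fin 3 → F) : Matrix (Fin 3) (Fin 3) F :=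
  Matrix.of fun j => ![s j ^ 2, s j * t j, t j ^ 2]

/-- Column `k` holds the coefficients, in the basis `s², s t, t²`, of the product of the two
linear forms `a m * s + b m * t` with `m ≠ k`. -/
def pairProductMatrix (a b : Fin 3 → F) : Matrix (Fin 3) (Fin 3) F :=
  !![a 1 * a 2, a 0 * a 2, a 0 * a 1;
    a 1 * b 2 + a 2 * b 1, a 0 * b 2 + a 2 * b 0, a 0 * b 1 + a 1 * b 0;
    b 1 * b 2, b 0 * b 2, b 0 * b 1]

theorem GoodPair.det_quadEvalMatrix_ne_zero {s t : Fin 3 → F} (h : GoodPair s t) :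
    (quadEvalMatrix s t).det ≠ 0 := by
  have hdet : (quadEvalMatrix s t).det =
      (s 0 * t 1 - s 1 * t 0) * (s 0 * t 2 - s 2 * t 0) * (s 1 * t 2 - s 2 * t 1) := by
    simp [quadEvalMatrix, Matrix.det_fin_three]
    ring
  rw [hdet]
  exact mul_ne_zero (mul_ne_zero (sub_ne_zero.2 (h 0 1 (by decide)))
    (sub_ne_zero.2 (h 0 2 (by decide)))) (sub_ne_zero.2 (h 1 2 (by decide)))

theorem GoodPair.det_pairProductMatrix_ne_zero {a b : Fin 3 → F} (h : GoodPair a b) :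
    (pairProductMatrix a b).det ≠ 0 := by
  have hdet : (pairProductMatrix a b).det =
      (a 1 * b 0 - a 0 * b 1) * (a 0 * b 2 - a 2 * b 0) * (a 1 * b 2 - a 2 * b 1) := by
    simp [pairProductMatrix, Matrix.det_fin_three]
    ring
  rw [hdet]
  exact mul_ne_zero (mul_ne_zero (sub_ne_zero.2 (h 1 0 (by decide)))
    (sub_ne_zero.2 (h 0 2 (by decide)))) (sub_ne_zero.2 (h 1 2 (by decide)))

def pairProductSum (c ℓ : Fin 3 → F) : F :=
  c 0 * (ℓ 1 * ℓ 2) + c 1 * (ℓ 0 * ℓ 2) + c 2 * (ℓ 0 * ℓ 1)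

theorem pairProductSum_eq_zero_of_sum_mul_inv_eq_zero {c ℓ : Fin 3 → F} (hℓ : ∀ k, ℓ k ≠ 0)
    (h : ∑ k, c k * (ℓ k)⁻¹ = 0) : pairProductSum c ℓ = 0 := by
  rw [Fin.sum_univ_three] at h
  field_simp [hℓ 0, hℓ 1, hℓ 2] at h
  unfold pairProductSum
  linear_combination h

theorem GoodPair.eq_zero_of_pairProductSum_eq_zero {a b s t c : Fin 3 → F} (hab : GoodPair a b)
    (hst : GoodPair s t) (h : ∀ j, pairProductSum c (fun k => a k * s j + b k * t j) = 0) :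
    c = 0 := by
  refine Matrix.eq_zero_of_mulVec_eq_zero hab.det_pairProductMatrix_ne_zero
    (Matrix.eq_zero_of_mulVec_eq_zero hst.det_quadEvalMatrix_ne_zero ?_)
  ext j
  have hj := h j
  unfold pairProductSum at hj
  simp [quadEvalMatrix, pairProductMatrix, Matrix.mulVec, dotProduct, Fin.sum_univ_three]
  linear_combination hj

theorem exists_embedding_forall_apply_ne_zero {ι κ M : Type*} [Fintype ι] [Fintype κ] [Zero M]
    {m : ℕ} (v : κ → ι → M) (hv : ∀ k, {i | v k i = 0}.Subsingleton)
    (hm : m + Fintype.card κ ≤ Fintype.card ι) : ∃ e : Fin m ↪ ι, ∀ j k, v k (e j) ≠ 0 := by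
  classical
  set zeros := Finset.univ.biUnion fun k => Finset.univ.filter fun i => v k i = 0
  have hzeros : zeros.card ≤ Fintype.card κ := by
    refine Finset.card_biUnion_le.trans ?_
    simpa using Finset.sum_le_card_nsmul Finset.univ _ 1 fun k _ =>
      Finset.card_le_one.2 fun i hi j hj => hv k (by simpa using hi) (by simpa using hj)
  obtain ⟨e⟩ : Nonempty (Fin m ↪ ↥zerosᶜ) :=
    Function.Embedding.nonempty_of_card_le (by simp; omega)
  refine ⟨e.trans (Function.Embedding.subtype _), fun j k hk => ?_⟩
  exact Finset.mem_compl.1 (e j).2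
    (Finset.mem_biUnion.2 ⟨k, Finset.mem_univ _, by simpa using hk⟩)

theorem mul_ne_mul_of_span_singleton_ne {V : Type*} [AddCommGroup V] [Module F V] {x y : V}
    {a b a' b' : F} (hu : a • x + b • y ≠ 0) (hv : a' • x + b' • y ≠ 0)
    (h : span F {a • x + b • y} ≠ span F {a' • x + b' • y}) : a * b' ≠ a' * b := by
  intro hab
  obtain ⟨α, β, hα, hαβ⟩ :
      ∃ α β : F, α ≠ 0 ∧ α • (a' • x + b' • y) = β • (a • x + b • y) := by
    by_cases ha : a = 0
    · have hb : b ≠ 0 := by rintro rfl; simp [ha] at hu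
      exact ⟨b, b', hb, by linear_combination (norm := module) -(hab • x)⟩
    · exact ⟨a, a', ha, by linear_combination (norm := module) hab • y⟩
  apply h
  rw [Submodule.span_singleton_eq_span_singleton]
  refine ⟨Units.mk0 (α⁻¹ * β) (mul_ne_zero (inv_ne_zero hα) ?_), ?_⟩
  · rintro rfl
    rw [zero_smul, smul_eq_zero] at hαβ
    exact hv (hαβ.resolve_left hα)
  · rw [Units.smul_mk0, mul_smul, ← hαβ, inv_smul_smul₀ hα]

theorem GoodPair.linearIndependent_vecInv {n : ℕ} (hn : 6 ≤ n) {x y : Fin n → F}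
    (hxy : GoodPair x y) {a b : Fin 3 → F} (hab : GoodPair a b) :
    LinearIndependent F fun k => vecInv (a k • x + b k • y) := by
  rw [Fintype.linearIndependent_iff]
  intro c hc
  obtain ⟨e, he⟩ := exists_embedding_forall_apply_ne_zero (m := 3)
    (fun k i => a k * x i + b k * y i)
    (fun k => hxy.subsingleton_setOf_add_eq_zero (hab.ne_zero_or_ne_zero k)) (by simpa using hn)
  have hc0 : c = 0 := hab.eq_zero_of_pairProductSum_eq_zero (hxy.comp e.injective) fun j =>
    pairProductSum_eq_zero_of_sum_mul_inv_eq_zero (he j)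
      (by simpa [vecInv] using congr_fun hc (e j))
  simp [hc0]

end

/-- For q ≥ 5 and three mutually distinct points P₁, P₂, P₃ on a simplex line,
the points I(P₁), I(P₂), I(P₃) span a projective plane (a 3-dimensional subspace). -/
theorem inv_of_three_points_span_plane (F : Type) [Field F] [Fintype F]
    (hq : 5 ≤ Fintype.card F)
    (L : Submodule F (Fin (Fintype.card F + 1) → F)) (hL : IsSimplexLine L)
    (x₁ x₂ x₃ : Fin (Fintype.card F + 1) → F)
    (h₁ : x₁ ∈ L) (h₂ : x₂ ∈ L) (h₃ : x₃ ∈ L)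
    (hn₁ : x₁ ≠ 0) (hn₂ : x₂ ≠ 0) (hn₃ : x₃ ≠ 0)
    (h₁₂ : span F {x₁} ≠ span F {x₂})
    (h₁₃ : span F {x₁} ≠ span F {x₃})
    (h₂₃ : span F {x₂} ≠ span F {x₃}) :
    finrank F ↥(span F {vecInv x₁, vecInv x₂, vecInv x₃}) = 3 := by
  obtain ⟨x, y, hxy, rfl⟩ := hL
  obtain ⟨a₁, b₁, rfl⟩ := mem_span_pair.1 h₁
  obtain ⟨a₂, b₂, rfl⟩ := mem_span_pair.1 h₂
  obtain ⟨a₃, b₃, rfl⟩ := mem_span_pair.1 h₃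
  have hab : GoodPair ![a₁, a₂, a₃] ![b₁, b₂, b₃] := goodPair_fin_three
    (mul_ne_mul_of_span_singleton_ne hn₁ hn₂ h₁₂) (mul_ne_mul_of_span_singleton_ne hn₁ hn₃ h₁₃)
    (mul_ne_mul_of_span_singleton_ne hn₂ hn₃ h₂₃)
  have hrank := finrank_span_eq_card (hxy.linearIndependent_vecInv (by omega) hab)
  rw [Fin.range_fin_succ, Fin.range_fin_succ, Set.range_unique] at hrank
  exact hrank
end

section
/- Let q be a prime power. For any mutually distinct 1-dimensional subspaces P₁, P₂, P₃ contained in a simplex line L of F^(q+1) and any mutually distinct 1-dimensional subspaces P₁′, P₂′, P₃′ contained in a simplex line L′, there exists a monomial linear automorphism l of F^(q+1) such that l(Pᵢ) = Pᵢ′ for i = 1, 2, 3. -/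
/-! The columns of a generator matrix of a simplex code are `q + 1` pairwise distinct points of
the projective line over `F`, hence every point exactly once; so any two generator matrices
differ by a monomial map. Every basis of a simplex line is a generator matrix, and three distinct
points of it can be written `⟨X₁⟩, ⟨X₂⟩, ⟨X₁ + X₂⟩` for a suitable basis `X₁, X₂`. The monomial
map carrying such a basis of `L` to one of `L'` therefore matches the three points. -/

open Submodule Module

open scoped LinearAlgebra.Projectivization

section LinearAlgebra

variable {F V : Type*} [Field F] [AddCommGroup V] [Module F V]

theorem linearIndependent_pair_of_span_ne {x y : V} (hx : x ≠ 0) (hy : y ≠ 0)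
    (hxy : span F {x} ≠ span F {y}) : LinearIndependent F ![x, y] := by
  refine (LinearIndependent.pair_iff' hx).mpr fun a hax => hxy ?_
  have ha : a ≠ 0 := by rintro rfl; exact hy (by simp [← hax])
  rw [← hax, span_singleton_smul_eq (IsUnit.mk0 a ha)]

theorem span_pair_eq_of_le {x y u v : V} (hxy : LinearIndependent F ![x, y])
    (hle : span F {x, y} ≤ span F {u, v}) : span F {x, y} = span F {u, v} := by
  have := FiniteDimensional.span_of_finite F (Set.toFinite {u, v})
  refine eq_of_le_of_finrank_le hle ?_
  have hrange : ∀ a b : V, Set.range ![a, b] = {a, b} := fun a b => by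
    rw [Matrix.range_cons, Matrix.range_cons, Matrix.range_empty, Set.union_empty,
      Set.singleton_union]
  rw [← hrange x y, finrank_span_eq_card hxy, ← hrange u v]
  exact (finrank_range_le_card _).trans_eq (Fintype.card_fin 2)

theorem exists_smul_add_smul_eq {x₁ x₂ x₃ : V} (hx₃ : x₃ ≠ 0)
    (hx₁₃ : span F {x₁} ≠ span F {x₃}) (hx₂₃ : span F {x₂} ≠ span F {x₃})
    (hmem : x₃ ∈ span F {x₁, x₂}) :
    ∃ α β : F, α ≠ 0 ∧ β ≠ 0 ∧ α • x₁ + β • x₂ = x₃ := by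
  obtain ⟨α, β, hsum⟩ := mem_span_pair.mp hmem
  have span_eq_of_smul_eq : ∀ {γ : F} {x : V}, γ • x = x₃ → span F {x} = span F {x₃} :=
    fun {γ x} hγ => by
      have hγ0 : γ ≠ 0 := by rintro rfl; exact hx₃ (by simp [← hγ])
      rw [← hγ, span_singleton_smul_eq (IsUnit.mk0 γ hγ0)]
  refine ⟨α, β, ?_, ?_, hsum⟩
  · rintro rfl
    exact hx₂₃ (span_eq_of_smul_eq (by simpa using hsum))
  · rintro rfl
    exact hx₁₃ (span_eq_of_smul_eq (by simpa using hsum))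

end LinearAlgebra

namespace GoodPair

variable {F : Type} [Field F] {n : ℕ} {u v : Fin n → F}

theorem eq_zero_of_apply_eq_zero (h : GoodPair u v) {i j : Fin n} (hij : i ≠ j) {s t : F}
    (hi : s * u i + t * v i = 0) (hj : s * u j + t * v j = 0) : s = 0 ∧ t = 0 := by
  have hdet : u i * v j - u j * v i ≠ 0 := sub_ne_zero.mpr (h i j hij)
  constructor
  · exact (mul_eq_zero.mp (by linear_combination v j * hi - v i * hj :
      s * (u i * v j - u j * v i) = 0)).resolve_right hdet
  · exact (mul_eq_zero.mp (by linear_combination u i * hj - u j * hi :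
      t * (u i * v j - u j * v i) = 0)).resolve_right hdet

theorem eq_zero_of_mem_span (h : GoodPair u v) {w : Fin n → F} (hw : w ∈ span F {u, v})
    {i j : Fin n} (hij : i ≠ j) (hi : w i = 0) (hj : w j = 0) : w = 0 := by
  obtain ⟨s, t, rfl⟩ := mem_span_pair.mp hw
  obtain ⟨rfl, rfl⟩ := h.eq_zero_of_apply_eq_zero hij (by simpa using hi) (by simpa using hj)
  simp

theorem of_mem_span (h : GoodPair u v) {x y : Fin n → F} (hx : x ∈ span F {u, v})
    (hy : y ∈ span F {u, v}) (hxy : LinearIndependent F ![x, y]) : GoodPair x y := by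
  intro i j hij hdet
  have hcomb : ∀ s t : F, s • x + t • y = 0 → s = 0 ∧ t = 0 := LinearIndependent.pair_iff.mp hxy
  have hmem : ∀ k, y k • x + (-x k) • y ∈ span F {u, v} := fun k =>
    add_mem (smul_mem _ _ hx) (smul_mem _ _ hy)
  obtain ⟨hyi, hxi⟩ := hcomb _ _ (h.eq_zero_of_mem_span (hmem i) hij
    (show y i * x i + -x i * y i = 0 by ring)
    (show y i * x j + -x i * y j = 0 by linear_combination -hdet))
  obtain ⟨hyj, hxj⟩ := hcomb _ _ (h.eq_zero_of_mem_span (hmem j) hij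
    (show y j * x i + -x j * y i = 0 by linear_combination hdet)
    (show y j * x j + -x j * y j = 0 by ring))
  have hx0 : x = 0 := h.eq_zero_of_mem_span hx hij (neg_eq_zero.mp hxi) (neg_eq_zero.mp hxj)
  exact one_ne_zero (hcomb 1 0 (by simp [hx0])).1

theorem column_ne_zero [Nontrivial (Fin n)] (h : GoodPair u v) (i : Fin n) : ![u i, v i] ≠ 0 := by
  intro hcol
  obtain ⟨j, hji⟩ := exists_ne i
  have hu : u i = 0 := congrFun hcol 0
  have hv : v i = 0 := congrFun hcol 1
  exact h i j hji.symm (by simp [hu, hv])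

noncomputable def projColumn [Nontrivial (Fin n)] (h : GoodPair u v) (i : Fin n) :
    ℙ F (Fin 2 → F) :=
  Projectivization.mk F ![u i, v i] (h.column_ne_zero i)

theorem projColumn_injective [Nontrivial (Fin n)] (h : GoodPair u v) :
    Function.Injective h.projColumn := by
  intro i j hij
  obtain ⟨a, ha⟩ := 
    (Projectivization.mk_eq_mk_iff' F _ _ (h.column_ne_zero i) (h.column_ne_zero j)).mp hij
  have hu : a * u j = u i := by simpa using congrFun ha 0
  have hv : a * v j = v i := by simpa using congrFun ha 1
  by_contra hne
  exact h i j hne (by rw [← hu, ← hv]; ring)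

end GoodPair

instance {F : Type} [Field F] [Fintype F] : Nontrivial (Fin (Fintype.card F + 1)) :=
  Fin.nontrivial_iff_two_le.mpr (by have := Fintype.card_pos (α := F); omega)

theorem GoodPair.projColumn_bijective {F : Type} [Field F] [Fintype F]
    {u v : Fin (Fintype.card F + 1) → F} (h : GoodPair u v) :
    Function.Bijective h.projColumn := by
  refine h.projColumn_injective.bijective_of_nat_card_le ?_
  rw [Projectivization.card_of_finrank_two F _ (Module.finrank_fin_fun F)]
  simp

def monomialEquiv {F : Type} [Field F] {n : ℕ} (a : Fin n → Fˣ) (σ : Equiv.Perm (Fin n)) :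
    (Fin n → F) ≃ₗ[F] (Fin n → F) :=
  (LinearEquiv.funCongrLeft F F σ).trans
    (LinearEquiv.piCongrRight fun i => LinearEquiv.smulOfUnit (a i))

theorem monomialEquiv_isMonomial {F : Type} [Field F] {n : ℕ} (a : Fin n → Fˣ)
    (σ : Equiv.Perm (Fin n)) : IsMonomial (monomialEquiv a σ) :=
  ⟨fun i => a i, σ, fun i => (a i).ne_zero, fun _ _ => rfl⟩

theorem GoodPair.exists_monomial {F : Type} [Field F] [Fintype F]
    {u v u' v' : Fin (Fintype.card F + 1) → F} (h : GoodPair u v) (h' : GoodPair u' v') :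
    ∃ l, IsMonomial l ∧ l u = u' ∧ l v = v' := by
  let σ := (Equiv.ofBijective _ h'.projColumn_bijective).trans
    (Equiv.ofBijective _ h.projColumn_bijective).symm
  have hσ : ∀ i, h'.projColumn i = h.projColumn (σ i) := fun i =>
    ((Equiv.ofBijective _ h.projColumn_bijective).apply_symm_apply _).symm
  choose a ha using fun i => (Projectivization.mk_eq_mk_iff F _ _ (h'.column_ne_zero i)
    (h.column_ne_zero (σ i))).mp (hσ i)
  exact ⟨monomialEquiv a σ, monomialEquiv_isMonomial a σ, funext fun i => congrFun (ha i) 0,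
    funext fun i => congrFun (ha i) 1⟩

theorem IsSimplexLine.exists_goodPair_add_eq {F : Type} [Field F] {n : ℕ}
    {L : Submodule F (Fin n → F)} (hL : IsSimplexLine L) {x₁ x₂ x₃ : Fin n → F}
    (hx₁ : x₁ ∈ L) (hx₂ : x₂ ∈ L) (hx₃ : x₃ ∈ L) (hnx₁ : x₁ ≠ 0) (hnx₂ : x₂ ≠ 0) (hnx₃ : x₃ ≠ 0)
    (hx₁₂ : span F {x₁} ≠ span F {x₂}) (hx₁₃ : span F {x₁} ≠ span F {x₃})
    (hx₂₃ : span F {x₂} ≠ span F {x₃}) :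
    ∃ X₁ X₂, GoodPair X₁ X₂ ∧ span F {X₁} = span F {x₁} ∧ span F {X₂} = span F {x₂} ∧
      X₁ + X₂ = x₃ := by
  obtain ⟨u, v, huv, rfl⟩ := hL
  have hspan : span F {x₁, x₂} = span F {u, v} :=
    span_pair_eq_of_le (linearIndependent_pair_of_span_ne hnx₁ hnx₂ hx₁₂)
      (span_le.mpr (Set.insert_subset_iff.mpr ⟨hx₁, Set.singleton_subset_iff.mpr hx₂⟩))
  obtain ⟨α, β, hα, hβ, hsum⟩ := exists_smul_add_smul_eq hnx₃ hx₁₃ hx₂₃ (hspan ▸ hx₃)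
  have hX₁ : span F {α • x₁} = span F {x₁} := span_singleton_smul_eq (IsUnit.mk0 α hα) x₁
  have hX₂ : span F {β • x₂} = span F {x₂} := span_singleton_smul_eq (IsUnit.mk0 β hβ) x₂
  have hind : LinearIndependent F ![α • x₁, β • x₂] :=
    linearIndependent_pair_of_span_ne (smul_ne_zero hα hnx₁) (smul_ne_zero hβ hnx₂)
      (by rwa [hX₁, hX₂])
  exact ⟨α • x₁, β • x₂, huv.of_mem_span (smul_mem _ _ hx₁) (smul_mem _ _ hx₂) hind, hX₁, hX₂,
    hsum⟩

/-- For any mutually distinct points P₁, P₂, P₃ on a simplex line L and mutually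
distinct points P₁′, P₂′, P₃′ on a simplex line L′, there is a monomial linear
automorphism l with l(Pᵢ) = Pᵢ′ for i = 1, 2, 3. -/
theorem monomial_three_transitive (F : Type) [Field F] [Fintype F]
    (L L' : Submodule F (Fin (Fintype.card F + 1) → F))
    (hL : IsSimplexLine L) (hL' : IsSimplexLine L')
    (x₁ x₂ x₃ y₁ y₂ y₃ : Fin (Fintype.card F + 1) → F)
    (hx₁ : x₁ ∈ L) (hx₂ : x₂ ∈ L) (hx₃ : x₃ ∈ L)
    (hy₁ : y₁ ∈ L') (hy₂ : y₂ ∈ L') (hy₃ : y₃ ∈ L')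
    (hnx₁ : x₁ ≠ 0) (hnx₂ : x₂ ≠ 0) (hnx₃ : x₃ ≠ 0)
    (hny₁ : y₁ ≠ 0) (hny₂ : y₂ ≠ 0) (hny₃ : y₃ ≠ 0)
    (hx₁₂ : span F {x₁} ≠ span F {x₂})
    (hx₁₃ : span F {x₁} ≠ span F {x₃})
    (hx₂₃ : span F {x₂} ≠ span F {x₃})
    (hy₁₂ : span F {y₁} ≠ span F {y₂})
    (hy₁₃ : span F {y₁} ≠ span F {y₃})
    (hy₂₃ : span F {y₂} ≠ span F {y₃}) :
    ∃ l : (Fin (Fintype.card F + 1) → F) ≃ₗ[F] (Fin (Fintype.card F + 1) → F),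
      IsMonomial l ∧
      Submodule.map (l : (Fin (Fintype.card F + 1) → F) →ₗ[F] (Fin (Fintype.card F + 1) → F))
          (span F {x₁}) = span F {y₁} ∧
      Submodule.map (l : (Fin (Fintype.card F + 1) → F) →ₗ[F] (Fin (Fintype.card F + 1) → F))
          (span F {x₂}) = span F {y₂} ∧
      Submodule.map (l : (Fin (Fintype.card F + 1) → F) →ₗ[F] (Fin (Fintype.card F + 1) → F))
          (span F {x₃}) = span F {y₃} := by
  obtain ⟨X₁, X₂, hX, hX₁, hX₂, hX₃⟩ :=
    hL.exists_goodPair_add_eq hx₁ hx₂ hx₃ hnx₁ hnx₂ hnx₃ hx₁₂ hx₁₃ hx₂₃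
  obtain ⟨Y₁, Y₂, hY, hY₁, hY₂, hY₃⟩ :=
    hL'.exists_goodPair_add_eq hy₁ hy₂ hy₃ hny₁ hny₂ hny₃ hy₁₂ hy₁₃ hy₂₃
  obtain ⟨l, hl, hlX₁, hlX₂⟩ := hX.exists_monomial hY
  have map_span : ∀ x, map (l : _ →ₗ[F] _) (span F {x}) = span F {l x} := fun x => by
    rw [Submodule.map_span, Set.image_singleton, LinearEquiv.coe_coe]
  refine ⟨l, hl, ?_, ?_, ?_⟩
  · rw [← hX₁, ← hY₁, map_span, hlX₁]
  · rw [← hX₂, ← hY₂, map_span, hlX₂]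
  · rw [← hX₃, ← hY₃, map_span, map_add, hlX₁, hlX₂]
end

section
/- Let q = 5. For any four mutually distinct 1-dimensional subspaces P₁, P₂, P₃, P₄ contained in a common simplex line of F^6, the points I(P₁), I(P₂), I(P₃), I(P₄) span a 4-dimensional subspace of F^6 (i.e., they span a 3-dimensional projective space). -/
open Submodule Module

lemma inv_cube (a : ZMod 5) : a⁻¹ = a ^ 3 := by
  rcases eq_or_ne a 0 with rfl | h
  · simp
  · have h4 : a * a ^ 3 = 1 := by
      have := ZMod.pow_card_sub_one_eq_one h
      norm_num at this
      linear_combination this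
    exact inv_eq_of_mul_eq_one_right h4

lemma cubic_zero : ∀ c3 c2 c1 c0 : ZMod 5,
    (∀ t : ZMod 5, c3 + c2 * t + c1 * t ^ 2 + c0 * t ^ 3 = 0) →
    c3 = 0 ∧ c2 = 0 ∧ c1 = 0 ∧ c0 = 0 := by decide

lemma key1 {F : Type} [Field F] (a0 a1 a2 a3 b0 b1 b2 b3 g0 g1 g2 g3 : F)
    (d1 : a0 * b1 ≠ a1 * b0) (d2 : a0 * b2 ≠ a2 * b0) (d3 : a0 * b3 ≠ a3 * b0)
    (S3 : g0 * a0 ^ 3 + g1 * a1 ^ 3 + g2 * a2 ^ 3 + g3 * a3 ^ 3 = 0)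
    (S2 : g0 * a0 ^ 2 * b0 + g1 * a1 ^ 2 * b1 + g2 * a2 ^ 2 * b2 + g3 * a3 ^ 2 * b3 = 0)
    (S1 : g0 * a0 * b0 ^ 2 + g1 * a1 * b1 ^ 2 + g2 * a2 * b2 ^ 2 + g3 * a3 * b3 ^ 2 = 0)
    (S0 : g0 * b0 ^ 3 + g1 * b1 ^ 3 + g2 * b2 ^ 3 + g3 * b3 ^ 3 = 0) : g0 = 0 := by
  have h : g0 * ((a0 * b1 - a1 * b0) * ((a0 * b2 - a2 * b0) * (a0 * b3 - a3 * b0))) = 0 := by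
    linear_combination (b1 * b2 * b3) * S3 - (a1 * b2 * b3 + b1 * a2 * b3 + b1 * b2 * a3) * S2
      + (a1 * a2 * b3 + a1 * b2 * a3 + b1 * a2 * a3) * S1 - (a1 * a2 * a3) * S0
  rcases mul_eq_zero.mp h with h | h
  · exact h
  · exact absurd h (mul_ne_zero (sub_ne_zero.mpr d1)
      (mul_ne_zero (sub_ne_zero.mpr d2) (sub_ne_zero.mpr d3)))

lemma coeff_nonprop {x y u v : Fin 6 → ZMod 5} {au bu av bv : ZMod 5}
    (hu : au • x + bu • y = u) (hv : av • x + bv • y = v)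
    (hnu : u ≠ 0) (hnv : v ≠ 0)
    (hne : span (ZMod 5) {u} ≠ span (ZMod 5) {v}) : au * bv ≠ av * bu := by
  intro h
  have hu0 : ¬(au = 0 ∧ bu = 0) := by
    rintro ⟨rfl, rfl⟩; apply hnu; rw [← hu]; simp
  have hv0 : ¬(av = 0 ∧ bv = 0) := by
    rintro ⟨rfl, rfl⟩; apply hnv; rw [← hv]; simp
  obtain ⟨l, hl0, hla, hlb⟩ : ∃ l : ZMod 5, l ≠ 0 ∧ av = l * au ∧ bv = l * bu := by
    by_cases hau : au = 0
    · have hbu : bu ≠ 0 := fun hb => hu0 ⟨hau, hb⟩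
      have hav : av = 0 := by
        have h' : av * bu = 0 := by rw [← h, hau]; ring
        rcases mul_eq_zero.mp h' with h'' | h''
        · exact h''
        · exact absurd h'' hbu
      have hbv : bv ≠ 0 := fun hb => hv0 ⟨hav, hb⟩
      exact ⟨bv * bu⁻¹, by simp [hbv, hbu], by rw [hav, hau]; ring, by field_simp⟩
    · have hav : av ≠ 0 := by
        intro h0
        have h' : au * bv = 0 := by rw [h, h0]; ring
        rcases mul_eq_zero.mp h' with h'' | h''
        · exact hau h''
        · exact hv0 ⟨h0, h''⟩
      refine ⟨av * au⁻¹, by simp [hav, hau], by field_simp, ?_⟩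
      field_simp
      linear_combination h
  have hveq : v = l • u := by
    rw [← hu, ← hv, hla, hlb]
    ext i
    simp only [Pi.add_apply, Pi.smul_apply, smul_eq_mul]
    ring
  apply hne
  rw [hveq, span_singleton_smul_eq (IsUnit.mk0 l hl0)]

/-- For q = 5 and four mutually distinct points P₁, …, P₄ on a simplex line,
the points I(P₁), …, I(P₄) span a 3-dimensional projective space
(a 4-dimensional subspace of F^6). -/
theorem inv_of_four_points_span_solid
    (L : Submodule (ZMod 5) (Fin 6 → ZMod 5)) (hL : IsSimplexLine L)
    (x₁ x₂ x₃ x₄ : Fin 6 → ZMod 5)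
    (h₁ : x₁ ∈ L) (h₂ : x₂ ∈ L) (h₃ : x₃ ∈ L) (h₄ : x₄ ∈ L)
    (hn₁ : x₁ ≠ 0) (hn₂ : x₂ ≠ 0) (hn₃ : x₃ ≠ 0) (hn₄ : x₄ ≠ 0)
    (h₁₂ : span (ZMod 5) {x₁} ≠ span (ZMod 5) {x₂})
    (h₁₃ : span (ZMod 5) {x₁} ≠ span (ZMod 5) {x₃})
    (h₁₄ : span (ZMod 5) {x₁} ≠ span (ZMod 5) {x₄})
    (h₂₃ : span (ZMod 5) {x₂} ≠ span (ZMod 5) {x₃})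
    (h₂₄ : span (ZMod 5) {x₂} ≠ span (ZMod 5) {x₄})
    (h₃₄ : span (ZMod 5) {x₃} ≠ span (ZMod 5) {x₄}) :
    finrank (ZMod 5) ↥(span (ZMod 5) {vecInv x₁, vecInv x₂, vecInv x₃, vecInv x₄}) = 4 := by
  have hL' : ∃ x y : Fin 6 → ZMod 5, GoodPair x y ∧ L = span (ZMod 5) {x, y} := hL
  obtain ⟨x, y, hGP, rfl⟩ := hL'
  obtain ⟨a₁, b₁, hxy₁⟩ := mem_span_pair.mp h₁
  obtain ⟨a₂, b₂, hxy₂⟩ := mem_span_pair.mp h₂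
  obtain ⟨a₃, b₃, hxy₃⟩ := mem_span_pair.mp h₃
  obtain ⟨a₄, b₄, hxy₄⟩ := mem_span_pair.mp h₄
  have d12 := coeff_nonprop hxy₁ hxy₂ hn₁ hn₂ h₁₂
  have d13 := coeff_nonprop hxy₁ hxy₃ hn₁ hn₃ h₁₃
  have d14 := coeff_nonprop hxy₁ hxy₄ hn₁ hn₄ h₁₄
  have d23 := coeff_nonprop hxy₂ hxy₃ hn₂ hn₃ h₂₃
  have d24 := coeff_nonprop hxy₂ hxy₄ hn₂ hn₄ h₂₄
  have d34 := coeff_nonprop hxy₃ hxy₄ hn₃ hn₄ h₃₄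
  -- columns are nonzero
  have hcolnz : ∀ i : Fin 6, ¬(x i = 0 ∧ y i = 0) := by
    rintro i ⟨hx, hy⟩
    obtain ⟨j, hj⟩ : ∃ j : Fin 6, j ≠ i := by
      by_cases h : i = 0
      · exact ⟨1, by rw [h]; decide⟩
      · exact ⟨0, fun hh => h hh.symm⟩
    exact hGP j i hj (by rw [hx, hy]; ring)
  -- the class map to the projective line
  set cls : Fin 6 → Option (ZMod 5) :=
    fun i => if x i = 0 then none else some (y i * (x i)⁻¹) with hcls
  have hinj : Function.Injective cls := by
    intro i j hcl
    by_contra hij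
    by_cases hxi : x i = 0
    · by_cases hxj : x j = 0
      · exact hGP i j hij (by rw [hxi, hxj]; ring)
      · simp [hcls, hxi, hxj] at hcl
    · by_cases hxj : x j = 0
      · simp [hcls, hxi, hxj] at hcl
      · simp [hcls, hxi, hxj] at hcl
        apply hGP i j hij
        field_simp at hcl
        linear_combination -hcl
  have hsurj : Function.Surjective cls := by
    have hb := (Fintype.bijective_iff_injective_and_card cls).mpr ⟨hinj, by simp⟩
    exact hb.2
  -- coordinates of the points
  have hx1i : ∀ i, x₁ i = a₁ * x i + b₁ * y i := fun i => by rw [← hxy₁]; simp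
  have hx2i : ∀ i, x₂ i = a₂ * x i + b₂ * y i := fun i => by rw [← hxy₂]; simp
  have hx3i : ∀ i, x₃ i = a₃ * x i + b₃ * y i := fun i => by rw [← hxy₃]; simp
  have hx4i : ∀ i, x₄ i = a₄ * x i + b₄ * y i := fun i => by rw [← hxy₄]; simp
  set w : Fin 4 → (Fin 6 → ZMod 5) := ![vecInv x₁, vecInv x₂, vecInv x₃, vecInv x₄] with hw
  have hli : LinearIndependent (ZMod 5) w := by
    rw [Fintype.linearIndependent_iff]
    intro g hg
    have hE : ∀ i : Fin 6,
        g 0 * (a₁ * x i + b₁ * y i) ^ 3 + g 1 * (a₂ * x i + b₂ * y i) ^ 3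
          + g 2 * (a₃ * x i + b₃ * y i) ^ 3 + g 3 * (a₄ * x i + b₄ * y i) ^ 3 = 0 := by
      intro i
      have h := congrFun hg i
      simp [hw, Fin.sum_univ_four, vecInv] at h
      rw [hx1i i, hx2i i, hx3i i, hx4i i] at h
      simp only [inv_cube] at h
      linear_combination h
    set s3 : ZMod 5 := g 0 * a₁ ^ 3 + g 1 * a₂ ^ 3 + g 2 * a₃ ^ 3 + g 3 * a₄ ^ 3 with hs3
    set s2 : ZMod 5 := g 0 * a₁ ^ 2 * b₁ + g 1 * a₂ ^ 2 * b₂ + g 2 * a₃ ^ 2 * b₃ + g 3 * a₄ ^ 2 * b₄ with hs2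
    set s1 : ZMod 5 := g 0 * a₁ * b₁ ^ 2 + g 1 * a₂ * b₂ ^ 2 + g 2 * a₃ * b₃ ^ 2 + g 3 * a₄ * b₄ ^ 2 with hs1
    set s0 : ZMod 5 := g 0 * b₁ ^ 3 + g 1 * b₂ ^ 3 + g 2 * b₃ ^ 3 + g 3 * b₄ ^ 3 with hs0
    have hC : ∀ i : Fin 6,
        s3 * (x i) ^ 3 + (3 * s2) * ((x i) ^ 2 * y i) + (3 * s1) * (x i * (y i) ^ 2)
          + s0 * (y i) ^ 3 = 0 := by
      intro i
      rw [hs3, hs2, hs1, hs0]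
      linear_combination hE i
    have hct : ∀ t : ZMod 5, s3 + (3 * s2) * t + (3 * s1) * t ^ 2 + s0 * t ^ 3 = 0 := by
      intro t
      obtain ⟨i, hi⟩ := hsurj (some t)
      have hxi : x i ≠ 0 := by
        intro h0; simp [hcls, h0] at hi
      have hyi : y i = t * x i := by
        simp [hcls, hxi] at hi
        field_simp at hi
        linear_combination hi
      have h' := hC i
      rw [hyi] at h'
      have h'' : (s3 + (3 * s2) * t + (3 * s1) * t ^ 2 + s0 * t ^ 3) * (x i) ^ 3 = 0 := by
        linear_combination h'
      rcases mul_eq_zero.mp h'' with h'' | h''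
      · exact h''
      · exact absurd h'' (pow_ne_zero _ hxi)
    obtain ⟨e3, e2, e1, e0⟩ := cubic_zero _ _ _ _ hct
    have hs2z : s2 = 0 := (mul_eq_zero.mp e2).resolve_left (by decide)
    have hs1z : s1 = 0 := (mul_eq_zero.mp e1).resolve_left (by decide)
    rw [hs3] at e3; rw [hs2] at hs2z; rw [hs1] at hs1z; rw [hs0] at e0
    have hg0 : g 0 = 0 := key1 a₁ a₂ a₃ a₄ b₁ b₂ b₃ b₄ _ _ _ _ d12 d13 d14 e3 hs2z hs1z e0
    have hg1 : g 1 = 0 := by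
      refine key1 a₂ a₁ a₃ a₄ b₂ b₁ b₃ b₄ (g 1) (g 0) (g 2) (g 3)
        (fun hh => d12 (by linear_combination -hh)) d23 d24 ?_ ?_ ?_ ?_
      · linear_combination e3
      · linear_combination hs2z
      · linear_combination hs1z
      · linear_combination e0
    have hg2 : g 2 = 0 := by
      refine key1 a₃ a₁ a₂ a₄ b₃ b₁ b₂ b₄ (g 2) (g 0) (g 1) (g 3)
        (fun hh => d13 (by linear_combination -hh)) (fun hh => d23 (by linear_combination -hh))
        d34 ?_ ?_ ?_ ?_
      · linear_combination e3
      · linear_combination hs2z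
      · linear_combination hs1z
      · linear_combination e0
    have hg3 : g 3 = 0 := by
      refine key1 a₄ a₁ a₂ a₃ b₄ b₁ b₂ b₃ (g 3) (g 0) (g 1) (g 2)
        (fun hh => d14 (by linear_combination -hh)) (fun hh => d24 (by linear_combination -hh))
        (fun hh => d34 (by linear_combination -hh)) ?_ ?_ ?_ ?_
      · linear_combination e3
      · linear_combination hs2z
      · linear_combination hs1z
      · linear_combination e0
    intro i
    fin_cases i
    · exact hg0
    · exact hg1
    · exact hg2
    · exact hg3
  have hset : ({vecInv x₁, vecInv x₂, vecInv x₃, vecInv x₄} : Set (Fin 6 → ZMod 5))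
      = Set.range w := by
    rw [hw]
    ext v
    simp [Matrix.range_cons, Matrix.range_empty]
    tauto
  rw [hset, finrank_span_eq_card hli]
  simp
end

section
/- Let q = 5. For any two collinear simplex points P and Q in F^6, there are precisely 4 simplex points which are collinear to both P and Q and do not lie on the line ⟨P,Q⟩ (the 2-dimensional subspace spanned by P and Q). -/
open Submodule Module

-- AUX START
instance goodPairDecidable {F : Type} [Field F] [DecidableEq F] {n : ℕ} (x y : Fin n → F) :
    Decidable (GoodPair x y) := by unfold GoodPair; infer_instance

def x0 : Fin 6 → ZMod 5 := ![0,1,1,1,1,1]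
def y0 : Fin 6 → ZMod 5 := ![1,0,1,2,3,4]
def w1 : Fin 6 → ZMod 5 := ![1,1,3,4,2,0]
def w2 : Fin 6 → ZMod 5 := ![1,2,4,1,0,3]
def w3 : Fin 6 → ZMod 5 := ![1,3,2,0,4,1]
def w4 : Fin 6 → ZMod 5 := ![1,4,0,3,1,2]

section Mono
variable {F : Type} [Field F] {n : ℕ}

/-- the monomial linear automorphism x ↦ (a i * x (σ i)) -/
def monoEquiv (a : Fin n → F) (ha : ∀ i, a i ≠ 0) (σ : Equiv.Perm (Fin n)) :
    (Fin n → F) ≃ₗ[F] (Fin n → F) where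
  toFun x := fun i => a i * x (σ i)
  invFun x := fun i => (a (σ.symm i))⁻¹ * x (σ.symm i)
  map_add' u v := by funext i; simp [mul_add]
  map_smul' c u := by funext i; simp [smul_eq_mul]; ring
  left_inv u := by
    funext i
    simp only [Equiv.apply_symm_apply]
    rw [inv_mul_cancel_left₀ (ha _)]
  right_inv u := by
    funext i
    simp only [Equiv.symm_apply_apply]
    rw [mul_inv_cancel_left₀ (ha _)]

variable (a : Fin n → F) (ha : ∀ i, a i ≠ 0) (σ : Equiv.Perm (Fin n))

lemma monoEquiv_apply (x : Fin n → F) (i : Fin n) : monoEquiv a ha σ x i = a i * x (σ i) := rfl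

lemma goodPair_mono (x y : Fin n → F) :
    GoodPair (monoEquiv a ha σ x) (monoEquiv a ha σ y) ↔ GoodPair x y := by
  constructor
  · intro h i j hij heq
    refine h (σ.symm i) (σ.symm j) (fun hc => hij (by simpa using congrArg σ hc)) ?_
    simp only [monoEquiv_apply, Equiv.apply_symm_apply]
    ring_nf
    linear_combination (a (σ.symm i) * a (σ.symm j)) * heq
  · intro h i j hij heq
    simp only [monoEquiv_apply] at heq
    have h2 : (a i * a j) * (x (σ i) * y (σ j)) = (a i * a j) * (x (σ j) * y (σ i)) := by
      linear_combination heq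
    have := mul_left_cancel₀ (mul_ne_zero (ha i) (ha j)) h2
    exact h (σ i) (σ j) (fun hc => hij (σ.injective hc)) this

lemma uniqZero_mono (x : Fin n → F) :
    (∃! i, monoEquiv a ha σ x i = 0) ↔ (∃! i, x i = 0) := by
  constructor
  · rintro ⟨i, hi, hu⟩
    refine ⟨σ i, ?_, ?_⟩
    · simpa [monoEquiv_apply, ha i] using hi
    · intro j hj
      have : monoEquiv a ha σ x (σ.symm j) = 0 := by
        simp [monoEquiv_apply, Equiv.apply_symm_apply, hj]
      have := hu _ this
      rw [← this]; simp
  · rintro ⟨i, hi, hu⟩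
    refine ⟨σ.symm i, ?_, ?_⟩
    · simp [monoEquiv_apply, Equiv.apply_symm_apply, hi]
    · intro j hj
      simp only [monoEquiv_apply, mul_eq_zero] at hj
      rcases hj with hj | hj
      · exact absurd hj (ha j)
      · have := hu _ hj
        exact σ.injective (by simp [this])

end Mono

lemma goodPair_smul_iff {F : Type} [Field F] {n : ℕ} {c : F} (hc : c ≠ 0) (x y : Fin n → F) :
    GoodPair (c • x) y ↔ GoodPair x y := by
  constructor
  · intro h i j hij heq
    exact h i j hij (by simp only [Pi.smul_apply, smul_eq_mul]; linear_combination c * heq)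
  · intro h i j hij heq
    simp only [Pi.smul_apply, smul_eq_mul] at heq
    have h2 : c * (x i * y j) = c * (x j * y i) := by linear_combination heq
    exact h i j hij (mul_left_cancel₀ hc h2)

lemma goodPair_comm {F : Type} [Field F] {n : ℕ} {x y : Fin n → F} (h : GoodPair x y) :
    GoodPair y x := fun i j hij heq => h i j hij (by linear_combination -heq)

lemma goodPair_smul_right_iff {F : Type} [Field F] {n : ℕ} {c : F} (hc : c ≠ 0)
    (x y : Fin n → F) : GoodPair x (c • y) ↔ GoodPair x y := by
  constructor
  · intro h
    exact goodPair_comm ((goodPair_smul_iff hc y x).mp (goodPair_comm h))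
  · intro h
    exact goodPair_comm ((goodPair_smul_iff hc y x).mpr (goodPair_comm h))

lemma ne_zero_of_uniqZero {x : Fin 6 → ZMod 5} (hx : ∃! i, x i = 0) : x ≠ 0 := by
  obtain ⟨i, hi, hu⟩ := hx
  intro h
  have h0 : (0 : Fin 6) = i := hu 0 (by simp [h])
  have h1 : (1 : Fin 6) = i := hu 1 (by simp [h])
  exact absurd (h0.trans h1.symm) (by decide)

def e0 : {i : Fin 6 // i ≠ 0} → ZMod 5 := fun i => y0 i.1

lemma he0 : Function.Bijective e0 := by decide

lemma x0_eq_one : ∀ i : Fin 6, i ≠ 0 → x0 i = 1 := by decide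

lemma exists_mono (x y : Fin 6 → ZMod 5) (hx : ∃! i, x i = 0) (hy : ∃! i, y i = 0)
    (hxy : GoodPair x y) :
    ∃ (a : Fin 6 → ZMod 5) (ha : ∀ i, a i ≠ 0) (σ : Equiv.Perm (Fin 6)),
      monoEquiv a ha σ x = x0 ∧ monoEquiv a ha σ y = y0 := by
  obtain ⟨i0, hxi0, hxu⟩ := hx
  obtain ⟨i1, hyi1, hyu⟩ := hy
  have hxj : ∀ j, j ≠ i0 → x j ≠ 0 := fun j hj h => hj (hxu j h)
  have hyj : ∀ j, j ≠ i1 → y j ≠ 0 := fun j hj h => hj (hyu j h)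
  have hne : i0 ≠ i1 := by
    intro h
    subst h
    obtain ⟨j, hj⟩ : ∃ j : Fin 6, j ≠ i0 := by
      rcases eq_or_ne i0 0 with h0 | h0
      · exact ⟨1, by rw [h0]; decide⟩
      · exact ⟨0, fun hc => h0 hc.symm⟩
    exact hxy i0 j (fun hc => hj hc.symm) (by rw [hxi0, hyi1]; ring)
  have hyi0 : y i0 ≠ 0 := hyj i0 hne
  -- ratio function
  set r : Fin 6 → ZMod 5 := fun j => y j * (x j)⁻¹ with hr
  have hy_eq : ∀ j, j ≠ i0 → y j = r j * x j := by
    intro j hj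
    have := hxj j hj
    rw [hr]
    field_simp
  have hrinj : ∀ j k : Fin 6, j ≠ i0 → k ≠ i0 → r j = r k → j = k := by
    intro j k hj hk h
    by_contra hjk
    exact hxy j k hjk (by rw [hy_eq k hk, hy_eq j hj, h]; ring)
  let e : {j : Fin 6 // j ≠ i0} → ZMod 5 := fun j => r j.1
  have he : Function.Bijective e := by
    rw [Fintype.bijective_iff_injective_and_card]
    constructor
    · intro j k h
      exact Subtype.ext (hrinj _ _ j.2 k.2 h)
    · simp [Fintype.card_subtype_compl]
  let E := Equiv.ofBijective e he
  let E' := Equiv.ofBijective e0 he0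
  let σf : Fin 6 → Fin 6 := fun i => if h : i = 0 then i0 else (E.symm (E' ⟨i, h⟩)).1
  have hσf0 : σf 0 = i0 := by simp [σf]
  have hσfne : ∀ i (h : i ≠ 0), σf i ≠ i0 := by
    intro i h
    simp only [σf, dif_neg h]
    exact (E.symm (E' ⟨i, h⟩)).2
  have hσfr : ∀ i (h : i ≠ 0), r (σf i) = y0 i := by
    intro i h
    simp only [σf, dif_neg h]
    have : e (E.symm (E' ⟨i, h⟩)) = E' ⟨i, h⟩ := by
      simp [E, Equiv.ofBijective_apply_symm_apply]
    rw [show (E' ⟨i, h⟩ : ZMod 5) = e0 ⟨i, h⟩ from rfl] at this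
    exact this
  have hσinj : Function.Injective σf := by
    intro i j h
    by_cases hi : i = 0 <;> by_cases hj : j = 0
    · rw [hi, hj]
    · exfalso; exact hσfne j hj (by rw [← h, hi, hσf0])
    · exfalso; exact hσfne i hi (by rw [h, hj, hσf0])
    · simp only [σf, dif_neg hi, dif_neg hj] at h
      have h3 : (⟨i, hi⟩ : {i : Fin 6 // i ≠ 0}) = ⟨j, hj⟩ :=
        E'.injective (E.symm.injective (Subtype.ext h))
      exact congrArg Subtype.val h3
  let σ : Equiv.Perm (Fin 6) := Equiv.ofBijective σf (Finite.injective_iff_bijective.mp hσinj)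
  have hσ : ∀ i, σ i = σf i := fun i => rfl
  let a : Fin 6 → ZMod 5 := fun i => if i = 0 then (y i0)⁻¹ else (x (σ i))⁻¹
  have ha : ∀ i, a i ≠ 0 := by
    intro i
    by_cases hi : i = 0
    · simp only [a, if_pos hi]
      exact inv_ne_zero hyi0
    · simp only [a, if_neg hi]
      exact inv_ne_zero (hxj _ (hσ i ▸ hσfne i hi))
  refine ⟨a, ha, σ, ?_, ?_⟩
  · funext i
    rw [monoEquiv_apply]
    by_cases hi : i = 0
    · subst hi
      rw [hσ, hσf0, hxi0, show x0 0 = 0 from rfl, mul_zero]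
    · simp only [a, if_neg hi]
      rw [x0_eq_one i hi, inv_mul_cancel₀ (hxj _ (hσ i ▸ hσfne i hi))]
  · funext i
    rw [monoEquiv_apply]
    by_cases hi : i = 0
    · subst hi
      simp only [a, if_pos rfl]
      rw [hσ, hσf0, inv_mul_cancel₀ hyi0]
      rfl
    · simp only [a, if_neg hi]
      rw [hy_eq (σ i) (hσ i ▸ hσfne i hi), hσ, hσfr i hi,
        mul_comm (y0 i) (x (σf i)), ← mul_assoc, inv_mul_cancel₀ (hxj _ (hσfne i hi)), one_mul]

set_option maxRecDepth 100000 in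
set_option maxHeartbeats 4000000 in
lemma key : ∀ b c d e f : ZMod 5, GoodPair ![1,b,c,d,e,f] x0 → GoodPair ![1,b,c,d,e,f] y0 →
    (∀ s t : ZMod 5, ![1,b,c,d,e,f] ≠ s • x0 + t • y0) →
    (![1,b,c,d,e,f] = w1 ∨ ![1,b,c,d,e,f] = w2 ∨ ![1,b,c,d,e,f] = w3 ∨
      ![1,b,c,d,e,f] = w4) := by decide

lemma key' (z : Fin 6 → ZMod 5) (h0 : z 0 = 1) (h1 : GoodPair z x0) (h2 : GoodPair z y0)
    (h3 : ∀ s t : ZMod 5, s • x0 + t • y0 ≠ z) : z = w1 ∨ z = w2 ∨ z = w3 ∨ z = w4 := by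
  have hz : z = ![z 0, z 1, z 2, z 3, z 4, z 5] := by
    funext i; fin_cases i <;> rfl
  rw [h0] at hz
  rw [hz] at h1 h2 ⊢
  exact key _ _ _ _ _ h1 h2 (fun s t hst => (h3 s t) (hst.symm ▸ hz.symm ▸ rfl))

lemma wGood : (GoodPair w1 x0 ∧ GoodPair w1 y0) ∧ (GoodPair w2 x0 ∧ GoodPair w2 y0) ∧
    (GoodPair w3 x0 ∧ GoodPair w3 y0) ∧ (GoodPair w4 x0 ∧ GoodPair w4 y0) := by decide

lemma wSpan : ∀ s t : ZMod 5, s • x0 + t • y0 ≠ w1 ∧ s • x0 + t • y0 ≠ w2 ∧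
    s • x0 + t • y0 ≠ w3 ∧ s • x0 + t • y0 ≠ w4 := by decide

lemma wZero : (∃! i, w1 i = 0) ∧ (∃! i, w2 i = 0) ∧ (∃! i, w3 i = 0) ∧ (∃! i, w4 i = 0) :=
  ⟨⟨5, by decide, by decide⟩, ⟨4, by decide, by decide⟩, ⟨3, by decide, by decide⟩,
    ⟨2, by decide, by decide⟩⟩

lemma wSmul : ∀ c : ZMod 5, c • w2 ≠ w1 ∧ c • w3 ≠ w1 ∧ c • w4 ≠ w1 ∧ c • w3 ≠ w2 ∧
    c • w4 ≠ w2 ∧ c • w4 ≠ w3 := by decide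

/-- For q = 5 and collinear simplex points P = ⟨x⟩, Q = ⟨y⟩ there are precisely 4
simplex points collinear to both P, Q and not on the line ⟨P,Q⟩. -/
theorem four_common_collinear_points (x y : Fin 6 → ZMod 5)
    (hx : ∃! i, x i = 0) (hy : ∃! i, y i = 0) (hxy : GoodPair x y) :
    {R : Submodule (ZMod 5) (Fin 6 → ZMod 5) | IsSimplexPoint R ∧
      PtCollinear R (span (ZMod 5) {x}) ∧ PtCollinear R (span (ZMod 5) {y}) ∧
      ¬ R ≤ span (ZMod 5) {x, y}}.ncard = 4 := by
  obtain ⟨a, ha, σ, hlx, hly⟩ := exists_mono x y hx hy hxy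
  set l := monoEquiv a ha σ with hl
  have hxne : x ≠ 0 := ne_zero_of_uniqZero hx
  have hyne : y ≠ 0 := ne_zero_of_uniqZero hy
  -- transfer of the span condition
  have hspan_tr : ∀ (z : Fin 6 → ZMod 5) (s t : ZMod 5), s • x + t • y = z ↔
      s • x0 + t • y0 = l z := by
    intro z s t
    rw [← hlx, ← hly, ← map_smul, ← map_smul, ← map_add]
    exact (LinearEquiv.injective l).eq_iff.symm
  -- main membership interpretation
  have hmem : ∀ w : Fin 6 → ZMod 5, GoodPair w x0 → GoodPair w y0 → (∃! i, w i = 0) →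
      (∀ s t : ZMod 5, s • x0 + t • y0 ≠ w) →
      (IsSimplexPoint (span (ZMod 5) {l.symm w}) ∧
        PtCollinear (span (ZMod 5) {l.symm w}) (span (ZMod 5) {x}) ∧
        PtCollinear (span (ZMod 5) {l.symm w}) (span (ZMod 5) {y}) ∧
        ¬ span (ZMod 5) {l.symm w} ≤ span (ZMod 5) {x, y}) := by
    intro w hw1 hw2 hw0 hwsp
    have hlw : l (l.symm w) = w := l.apply_symm_apply w
    have hgx : GoodPair (l.symm w) x := by
      rw [← goodPair_mono a ha σ]
      rw [← hl, hlw, hlx]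
      exact hw1
    have hgy : GoodPair (l.symm w) y := by
      rw [← goodPair_mono a ha σ]
      rw [← hl, hlw, hly]
      exact hw2
    have huz : ∃! i, (l.symm w) i = 0 := by
      rw [← uniqZero_mono a ha σ, ← hl, hlw]
      exact hw0
    refine ⟨⟨l.symm w, huz, rfl⟩, ⟨l.symm w, x, hgx, rfl, rfl⟩, ⟨l.symm w, y, hgy, rfl, rfl⟩, ?_⟩
    rw [span_singleton_le_iff_mem, mem_span_pair]
    rintro ⟨s, t, hst⟩
    exact hwsp s t (((hspan_tr _ s t).mp hst).trans hlw)
  -- the four points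
  have hw := wGood
  have hset : {R : Submodule (ZMod 5) (Fin 6 → ZMod 5) | IsSimplexPoint R ∧
      PtCollinear R (span (ZMod 5) {x}) ∧ PtCollinear R (span (ZMod 5) {y}) ∧
      ¬ R ≤ span (ZMod 5) {x, y}} =
      {span (ZMod 5) {l.symm w1}, span (ZMod 5) {l.symm w2},
        span (ZMod 5) {l.symm w3}, span (ZMod 5) {l.symm w4}} := by
    ext R
    simp only [Set.mem_setOf_eq, Set.mem_insert_iff, Set.mem_singleton_iff]
    constructor
    · rintro ⟨⟨z, hzu, rfl⟩, ⟨x', y', hgp, hsp1, hsp2⟩, ⟨x'', y'', hgp', hsp1', hsp2'⟩, hnb⟩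
      have hzne : z ≠ 0 := ne_zero_of_uniqZero hzu
      -- x' = c • z with c ≠ 0
      have hx'mem : x' ∈ span (ZMod 5) {z} := by
        rw [hsp1]; exact mem_span_singleton_self x'
      obtain ⟨c, hc⟩ := mem_span_singleton.mp hx'mem
      have hcne : c ≠ 0 := by
        rintro rfl
        rw [zero_smul] at hc
        have : z ∈ span (ZMod 5) {x'} := by
          rw [← hsp1]; exact mem_span_singleton_self z
        rw [← hc, Submodule.span_zero_singleton, mem_bot] at this
        exact hzne this
      have hy'mem : y' ∈ span (ZMod 5) {x} := by
        rw [hsp2]; exact mem_span_singleton_self y'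
      obtain ⟨d, hd⟩ := mem_span_singleton.mp hy'mem
      have hdne : d ≠ 0 := by
        rintro rfl
        rw [zero_smul] at hd
        have : x ∈ span (ZMod 5) {y'} := by
          rw [← hsp2]; exact mem_span_singleton_self x
        rw [← hd, Submodule.span_zero_singleton, mem_bot] at this
        exact hxne this
      rw [← hc, ← hd, goodPair_smul_iff hcne, goodPair_smul_right_iff hdne] at hgp
      -- same for y
      have hx''mem : x'' ∈ span (ZMod 5) {z} := by
        rw [hsp1']; exact mem_span_singleton_self x''
      obtain ⟨c', hc'⟩ := mem_span_singleton.mp hx''mem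
      have hc'ne : c' ≠ 0 := by
        rintro rfl
        rw [zero_smul] at hc'
        have : z ∈ span (ZMod 5) {x''} := by
          rw [← hsp1']; exact mem_span_singleton_self z
        rw [← hc', Submodule.span_zero_singleton, mem_bot] at this
        exact hzne this
      have hy''mem : y'' ∈ span (ZMod 5) {y} := by
        rw [hsp2']; exact mem_span_singleton_self y''
      obtain ⟨d', hd'⟩ := mem_span_singleton.mp hy''mem
      have hd'ne : d' ≠ 0 := by
        rintro rfl
        rw [zero_smul] at hd'
        have : y ∈ span (ZMod 5) {y''} := by
          rw [← hsp2']; exact mem_span_singleton_self y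
        rw [← hd', Submodule.span_zero_singleton, mem_bot] at this
        exact hyne this
      rw [← hc', ← hd', goodPair_smul_iff hc'ne, goodPair_smul_right_iff hd'ne] at hgp'
      -- now hgp : GoodPair z x, hgp' : GoodPair z y
      have hnotspan : ∀ s t : ZMod 5, s • x + t • y ≠ z := by
        intro s t heq
        exact hnb ((span_singleton_le_iff_mem z _).mpr (mem_span_pair.mpr ⟨s, t, heq⟩))
      set u := l z with hu
      have hu1 : GoodPair u x0 := by
        rw [hu, ← hlx, hl, goodPair_mono a ha σ]; exact hgp
      have hu2 : GoodPair u y0 := by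
        rw [hu, ← hly, hl, goodPair_mono a ha σ]; exact hgp'
      have huu : ∃! i, u i = 0 := by
        rw [hu, hl, uniqZero_mono a ha σ]; exact hzu
      have hus : ∀ s t : ZMod 5, s • x0 + t • y0 ≠ u := by
        intro s t heq
        exact hnotspan s t ((hspan_tr z s t).mpr heq)
      have hu0 : u 0 ≠ 0 := by
        intro h0
        exact hu1 0 1 (by decide)
          (by rw [h0, show x0 1 = 1 from rfl, show x0 0 = 0 from rfl]; ring)
      have hinv : (u 0)⁻¹ ≠ 0 := inv_ne_zero hu0
      set v := (u 0)⁻¹ • u with hv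
      have hv0 : v 0 = 1 := by
        rw [hv]; exact inv_mul_cancel₀ hu0
      have hv1 : GoodPair v x0 := (goodPair_smul_iff hinv u x0).mpr hu1
      have hv2 : GoodPair v y0 := (goodPair_smul_iff hinv u y0).mpr hu2
      have hvs : ∀ s t : ZMod 5, s • x0 + t • y0 ≠ v := by
        intro s t heq
        apply hus (u 0 * s) (u 0 * t)
        have h2 := congrArg (fun q => (u 0) • q) heq
        simp only [smul_add, smul_smul] at h2
        rwa [hv, smul_inv_smul₀ hu0] at h2
      have huv : u = (u 0) • v := (smul_inv_smul₀ hu0 u).symm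
      have hzv : ∀ wk : Fin 6 → ZMod 5, v = wk →
          span (ZMod 5) {z} = span (ZMod 5) {l.symm wk} := by
        intro wk hvw
        have hzu' : z = (u 0) • l.symm wk := by
          rw [← hvw, ← map_smul, ← huv, hu, LinearEquiv.symm_apply_apply]
        rw [hzu', span_singleton_smul_eq (isUnit_iff_ne_zero.mpr hu0)]
      rcases key' v hv0 hv1 hv2 hvs with h | h | h | h
      · exact Or.inl (hzv w1 h)
      · exact Or.inr (Or.inl (hzv w2 h))
      · exact Or.inr (Or.inr (Or.inl (hzv w3 h)))
      · exact Or.inr (Or.inr (Or.inr (hzv w4 h)))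
    · rintro (rfl | rfl | rfl | rfl)
      · exact hmem w1 hw.1.1 hw.1.2 wZero.1 (fun s t => (wSpan s t).1)
      · exact hmem w2 hw.2.1.1 hw.2.1.2 wZero.2.1 (fun s t => (wSpan s t).2.1)
      · exact hmem w3 hw.2.2.1.1 hw.2.2.1.2 wZero.2.2.1 (fun s t => (wSpan s t).2.2.1)
      · exact hmem w4 hw.2.2.2.1 hw.2.2.2.2 wZero.2.2.2 (fun s t => (wSpan s t).2.2.2)
  -- distinctness
  have spanNe : ∀ wa wb : Fin 6 → ZMod 5, (∀ c : ZMod 5, c • wb ≠ wa) →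
      span (ZMod 5) {l.symm wa} ≠ span (ZMod 5) {l.symm wb} := by
    intro wa wb hno h
    have hmem' : l.symm wa ∈ span (ZMod 5) {l.symm wb} := by
      rw [← h]; exact mem_span_singleton_self _
    obtain ⟨c, hc⟩ := mem_span_singleton.mp hmem'
    apply hno c
    have h2 := congrArg l hc
    rw [map_smul, LinearEquiv.apply_symm_apply, LinearEquiv.apply_symm_apply] at h2
    exact h2
  have h12 := spanNe w1 w2 (fun c => (wSmul c).1)
  have h13 := spanNe w1 w3 (fun c => (wSmul c).2.1)
  have h14 := spanNe w1 w4 (fun c => (wSmul c).2.2.1)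
  have h23 := spanNe w2 w3 (fun c => (wSmul c).2.2.2.1)
  have h24 := spanNe w2 w4 (fun c => (wSmul c).2.2.2.2.1)
  have h34 := spanNe w3 w4 (fun c => (wSmul c).2.2.2.2.2)
  rw [hset]
  rw [Set.ncard_insert_of_notMem (by simp [h12, h13, h14]) (Set.toFinite _),
    Set.ncard_insert_of_notMem (by simp [h23, h24]) (Set.toFinite _),
    Set.ncard_insert_of_notMem (by simp [h34]) (Set.toFinite _),
    Set.ncard_singleton]
end

section
/- Let q = 5 and let P, Q be collinear simplex points in F^6. Then the set I(⟨I(P), I(Q)⟩) \ {P, Q} — the image under the inversion I of the set of all 1-dimensional subspaces contained in the simplex line through I(P) and I(Q), with P and Q removed — is exactly the set of all simplex points which are collinear to both P and Q and do not lie on the line ⟨P, Q⟩. -/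
open Submodule Module

set_option maxHeartbeats 2000000

lemma inv_eq_cube (a : ZMod 5) : a⁻¹ = a^3 := by
  rcases eq_or_ne a 0 with h | h
  · subst h; rw [ZMod.inv_zero]; norm_num
  · refine ZMod.inv_eq_of_mul_eq_one 5 a _ ?_
    calc a * a ^ 3 = a ^ 4 := by ring
    _ = 1 := ZMod.pow_card_sub_one_eq_one h

lemma gp_symm {u v : Fin 6 → ZMod 5} (h : GoodPair u v) : GoodPair v u :=
  fun i j hij heq => h i j hij (by linear_combination -heq)

lemma gp_unsmul {u v : Fin 6 → ZMod 5} {c d : ZMod 5} (hc : c ≠ 0) (hd : d ≠ 0)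
    (h : GoodPair (c • u) (d • v)) : GoodPair u v := by
  intro i j hij heq
  refine h i j hij ?_
  show (c * u i) * (d * v j) = (c * u j) * (d * v i)
  linear_combination (c*d) * heq

lemma span_eq_iff {v w : Fin 6 → ZMod 5} (hw : w ≠ 0) :
    span (ZMod 5) {v} = span (ZMod 5) {w} ↔ ∃ c : ZMod 5, c ≠ 0 ∧ v = c • w := by
  constructor
  · intro h
    have hv : v ∈ span (ZMod 5) {w} := h ▸ mem_span_singleton_self v
    obtain ⟨c, hc⟩ := mem_span_singleton.mp hv
    refine ⟨c, ?_, hc.symm⟩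
    rintro rfl
    rw [zero_smul] at hc
    rw [← hc, span_zero_singleton] at h
    exact hw (span_singleton_eq_bot.mp h.symm)
  · rintro ⟨c, hc, rfl⟩
    exact span_singleton_smul_eq hc.isUnit w

-- decide lemmas
lemma z1 : ∀ a : ZMod 5, (a^3)^3 = a := by decide
lemma z6 : ∀ B Y : ZMod 5, B ≠ 0 → Y ≠ 0 → ((0:ZMod 5)^3 + B*Y^3)^3 ≠ 0 := by decide
lemma z7 : ∀ X B : ZMod 5, X ≠ 0 → (X^3 + B*(0:ZMod 5)^3)^3 ≠ 0 := by decide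
lemma z8 : ∀ X Y B : ZMod 5, X ≠ 0 → Y ≠ 0 → B ≠ 0 → (X^3 + B*Y^3)^3 = 0 → Y = -B*X := by decide
lemma z5' : ∀ X Y B : ZMod 5, B ≠ 0 → Y = -B*X → (X^3 + B*Y^3)^3 = 0 := by decide
lemma z9 : ∀ al be b Y : ZMod 5, Y ≠ 0 → al*0 + be*Y = ((0:ZMod 5)^3 + b*Y^3)^3 → be = b^3 := by decide
lemma z10 : ∀ al be b X : ZMod 5, X ≠ 0 → al*X + be*0 = (X^3 + b*(0:ZMod 5)^3)^3 → al = 1 := by decide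
lemma z12' : ∀ a X : ZMod 5, (a*X^3)^3 = a^3*X := by decide
lemma z13 : ∀ a c X Y : ZMod 5, a ≠ 0 → a*X + c*Y = a*(X + a^3*c*Y) := by decide
lemma d3' : ∀ b : ZMod 5, b ≠ 0 → ∃ u : ZMod 5, u ≠ 0 ∧
    ∀ xv : ZMod 5, xv ≠ 0 → 1*xv + b^3*(u*xv) ≠ (xv^3 + b*(u*xv)^3)^3 := by decide
lemma rat_ne : ∀ d1 n1 d2 n2 : ZMod 5, d1 ≠ 0 → d2 ≠ 0 → d1*n2 ≠ d2*n1 →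
    n1*d1^3 ≠ n2*d2^3 := by decide
lemma unrat : ∀ W Y T : ZMod 5, Y ≠ 0 → W*Y^3 = T → W = T*Y := by decide
lemma e1 : ∀ Y1 X1 Y2 X2 : ZMod 5, X1 ≠ 0 → X2 ≠ 0 → X1*Y2 ≠ X2*Y1 →
    Y1*X1^3*(Y2*X2^3)^3 ≠ 1 := by decide
lemma e2 : ∀ Y1 X1 Y2 X2 M : ZMod 5, X1 ≠ 0 → X2 ≠ 0 → M ≠ 0 → X1*Y2 ≠ X2*Y1 →
    Y1*X1^3*M^3 ≠ Y2*X2^3*M^3 := by decide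
lemma e6 : ∀ W Y X P M : ZMod 5, X ≠ 0 →
    W*X^3*P^3*(Y*X^3*M^3)^3 = W*Y^3*(P^3*M^9) := by decide
lemma e7 : ∀ W X Y P M : ZMod 5, X ≠ 0 → Y ≠ 0 → P ≠ 0 → M ≠ 0 → W ≠ 0 →
    W*X^3*P^3 = 1 - Y*X^3*M^3 → -(P*M^3) ≠ W*Y^3 := by decide
lemma e9 : ∀ P M X : ZMod 5, M ≠ 0 → P*X + (-(P*M^3))*(M*X) = 0 := by decide
lemma e10o : ∀ P M U R X : ZMod 5, P = 0 ∨ M = 0 ∨ X = 0 ∨ U = 0 ∨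
    ¬(R*P^3 = 1 - U*M^3) ∨ P*X + (-(P*M^3))*(U*X) = R*X := by decide
lemma e10 (P M U R X : ZMod 5) (hP : P ≠ 0) (hM : M ≠ 0) (hX : X ≠ 0) (hU : U ≠ 0)
    (h : R*P^3 = 1 - U*M^3) : P*X + (-(P*M^3))*(U*X) = R*X :=
  ((((((e10o P M U R X).resolve_left hP).resolve_left hM).resolve_left
    hX).resolve_left hU).resolve_left (not_not_intro h))
lemma e11 : ∀ W X Y P M : ZMod 5, X ≠ 0 → Y ≠ 0 → P ≠ 0 → M ≠ 0 → W ≠ 0 →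
    W*X^3*P^3*(Y*X^3*M^3 - 1) = Y*X^3*M^3 → -(P*M^3) ≠ W*Y^3 := by decide
lemma e12 : ∀ P M Y : ZMod 5, P*(((0:ZMod 5)^3 + (-M)*Y^3)^3) = -(P*M^3)*Y := by decide
lemma e13 : ∀ X B : ZMod 5, (X^3 + B*(0:ZMod 5)^3)^3 = X := by decide
lemma e14' : ∀ X Y M P : ZMod 5, M ≠ 0 → Y = M*X → P*((X^3 + (-M)*Y^3)^3) = 0 := by decide
lemma e15' : ∀ W X Y P M : ZMod 5, X ≠ 0 → Y ≠ 0 → P ≠ 0 → M ≠ 0 →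
    W*X^3*P^3*(Y*X^3*M^3 - 1) = Y*X^3*M^3 → W = P*((X^3 + (-M)*Y^3)^3) := by decide
lemma d4 : ∀ a b c1 c2 c3 c4 : ZMod 5,
    (c1 ≠ c2 ∧ c1 ≠ c3 ∧ c1 ≠ c4 ∧ c2 ≠ c3 ∧ c2 ≠ c4 ∧ c3 ≠ c4 ∧
     a ≠ c1 ∧ a ≠ c2 ∧ a ≠ c3 ∧ a ≠ c4 ∧ b ≠ c1 ∧ b ≠ c2 ∧ b ≠ c3 ∧ b ≠ c4) →
    a = b := by decide
lemma d6o : ∀ t1 t2 t3 t4 u : ZMod 5,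
    ¬(t1 ≠ t2 ∧ t1 ≠ t3 ∧ t1 ≠ t4 ∧ t2 ≠ t3 ∧ t2 ≠ t4 ∧ t3 ≠ t4 ∧
     t1 ≠ 0 ∧ t2 ≠ 0 ∧ t3 ≠ 0 ∧ t4 ≠ 0 ∧ u ≠ 0) ∨
    (u = t1 ∨ u = t2 ∨ u = t3 ∨ u = t4) := by decide
lemma d6 (t1 t2 t3 t4 u : ZMod 5)
    (h : t1 ≠ t2 ∧ t1 ≠ t3 ∧ t1 ≠ t4 ∧ t2 ≠ t3 ∧ t2 ≠ t4 ∧ t3 ≠ t4 ∧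
     t1 ≠ 0 ∧ t2 ≠ 0 ∧ t3 ≠ 0 ∧ t4 ≠ 0 ∧ u ≠ 0) :
    u = t1 ∨ u = t2 ∨ u = t3 ∨ u = t4 :=
  (d6o t1 t2 t3 t4 u).resolve_left (not_not_intro h)
lemma f1 : ∀ i0 j0 : Fin 6, i0 ≠ j0 → ∃ a b c d : Fin 6,
    (a ≠ b ∧ a ≠ c ∧ a ≠ d ∧ b ≠ c ∧ b ≠ d ∧ c ≠ d ∧
     a ≠ i0 ∧ a ≠ j0 ∧ b ≠ i0 ∧ b ≠ j0 ∧ c ≠ i0 ∧ c ≠ j0 ∧ d ≠ i0 ∧ d ≠ j0) := by decide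
lemma f2o : ∀ i0 j0 k : Fin 6, ¬(i0 ≠ j0 ∧ k ≠ i0 ∧ k ≠ j0) ∨ ∃ a b c : Fin 6,
    (a ≠ b ∧ a ≠ c ∧ b ≠ c ∧
      a ≠ i0 ∧ a ≠ j0 ∧ a ≠ k ∧ b ≠ i0 ∧ b ≠ j0 ∧ b ≠ k ∧ c ≠ i0 ∧ c ≠ j0 ∧ c ≠ k) := by decide
lemma f2 (i0 j0 k : Fin 6) (h : i0 ≠ j0 ∧ k ≠ i0 ∧ k ≠ j0) : ∃ a b c : Fin 6,
    (a ≠ b ∧ a ≠ c ∧ b ≠ c ∧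
      a ≠ i0 ∧ a ≠ j0 ∧ a ≠ k ∧ b ≠ i0 ∧ b ≠ j0 ∧ b ≠ k ∧ c ≠ i0 ∧ c ≠ j0 ∧ c ≠ k) :=
  (f2o i0 j0 k).resolve_left (not_not_intro h)

lemma cover {i0 j0 k a b c : Fin 6}
    (hab : a ≠ b) (hac : a ≠ c) (hbc : b ≠ c)
    (hai : a ≠ i0) (haj : a ≠ j0) (hak : a ≠ k)
    (hbi : b ≠ i0) (hbj : b ≠ j0) (hbk : b ≠ k)
    (hci : c ≠ i0) (hcj : c ≠ j0) (hck : c ≠ k)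
    (hij : i0 ≠ j0) (hki : k ≠ i0) (hkj : k ≠ j0) (i : Fin 6) :
    i = i0 ∨ i = j0 ∨ i = k ∨ i = a ∨ i = b ∨ i = c := by
  by_contra hcon
  push_neg at hcon
  obtain ⟨n1, n2, n3, n4, n5, n6⟩ := hcon
  have hcard := Finset.card_le_card
    (Finset.subset_univ ({i, i0, j0, k, a, b, c} : Finset (Fin 6)))
  rw [Finset.card_univ, Fintype.card_fin] at hcard
  have h7 : ({i, i0, j0, k, a, b, c} : Finset (Fin 6)).card = 7 := by
    rw [Finset.card_insert_of_notMem (by simp [n1, n2, n3, n4, n5, n6]),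
        Finset.card_insert_of_notMem
          (by simp [hij, Ne.symm hki, Ne.symm hai, Ne.symm hbi, Ne.symm hci]),
        Finset.card_insert_of_notMem
          (by simp [Ne.symm hkj, Ne.symm haj, Ne.symm hbj, Ne.symm hcj]),
        Finset.card_insert_of_notMem (by simp [Ne.symm hak, Ne.symm hbk, Ne.symm hck]),
        Finset.card_insert_of_notMem (by simp [hab, hac]),
        Finset.card_insert_of_notMem (by simp [hbc]),
        Finset.card_singleton]
  omega

lemma vecInv_apply (v : Fin 6 → ZMod 5) (i : Fin 6) : vecInv v i = (v i)⁻¹ := rfl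
lemma gpwx : ∀ a c d e b : ZMod 5, b ≠ 0 → a*e ≠ d*c →
    ((a^3 + b * c^3)^3 * d ≠ (d^3 + b * e^3)^3 * a) := by decide
lemma gpwy : ∀ a c d e b : ZMod 5, b ≠ 0 → a*e ≠ d*c →
    ((a^3 + b * c^3)^3 * e ≠ (d^3 + b * e^3)^3 * c) := by decide
lemma e16 : ∀ M Y : ZMod 5, M ≠ 0 → Y ≠ 0 → (0:ZMod 5)^3 + (-M)*Y^3 ≠ 0 := by decide
set_option maxRecDepth 40000 in
set_option maxHeartbeats 4000000 in
lemma key1_s12 : ∀ u1 u2 u3 r1 r2 r3 : ZMod 5,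
    (u1 ≠ 0 ∧ u2 ≠ 0 ∧ u3 ≠ 0 ∧
    u1 ≠ 1 ∧ u2 ≠ 1 ∧ u3 ≠ 1 ∧ u1 ≠ u2 ∧ u1 ≠ u3 ∧ u2 ≠ u3 ∧
    r1 ≠ 0 ∧ r2 ≠ 0 ∧ r3 ≠ 0 ∧ r1 ≠ 1 ∧ r2 ≠ 1 ∧ r3 ≠ 1 ∧
    r1 ≠ r2 ∧ r1 ≠ r3 ∧ r2 ≠ r3 ∧
    r1 * u1^3 ≠ r2 * u2^3 ∧ r1 * u1^3 ≠ r3 * u3^3 ∧ r2 * u2^3 ≠ r3 * u3^3 ∧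
    ¬(r1 = 1 - u1 ∧ r2 = 1 - u2 ∧ r3 = 1 - u3)) →
    (r1 * (u1 - 1) = u1 ∧ r2 * (u2 - 1) = u2 ∧ r3 * (u3 - 1) = u3) := by decide

/-- For q = 5 and collinear simplex points P = ⟨x⟩, Q = ⟨y⟩, the set
I(⟨I(P),I(Q)⟩) \ {P,Q} is exactly the set of simplex points collinear to both
P and Q and not on the line ⟨P,Q⟩. -/
theorem inv_line_gives_common_collinear (x y : Fin 6 → ZMod 5)
    (hx : ∃! i, x i = 0) (hy : ∃! i, y i = 0) (hxy : GoodPair x y) :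
    {R : Submodule (ZMod 5) (Fin 6 → ZMod 5) |
        ∃ z : Fin 6 → ZMod 5, z ≠ 0 ∧ z ∈ span (ZMod 5) {vecInv x, vecInv y} ∧
          R = span (ZMod 5) {vecInv z}} \ {span (ZMod 5) {x}, span (ZMod 5) {y}} =
      {R : Submodule (ZMod 5) (Fin 6 → ZMod 5) | IsSimplexPoint R ∧
        PtCollinear R (span (ZMod 5) {x}) ∧ PtCollinear R (span (ZMod 5) {y}) ∧
        ¬ R ≤ span (ZMod 5) {x, y}} := by
  obtain ⟨i₀, hxi0, hxu⟩ := hx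
  obtain ⟨j₀, hyj0, hyu⟩ := hy
  have hxne : ∀ i, i ≠ i₀ → x i ≠ 0 := fun i hi h => hi (hxu i h)
  have hyne : ∀ i, i ≠ j₀ → y i ≠ 0 := fun i hi h => hi (hyu i h)
  have hij : i₀ ≠ j₀ := by
    intro h
    obtain ⟨j, hj⟩ := exists_ne i₀
    exact hxy j i₀ hj (by rw [hxi0, h, hyj0]; ring)
  have hyi0 : y i₀ ≠ 0 := hyne i₀ hij
  have hxj0 : x j₀ ≠ 0 := hxne j₀ (Ne.symm hij)
  have hxn0 : x ≠ 0 := fun h => hxj0 (by rw [h]; rfl)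
  have hyn0 : y ≠ 0 := fun h => hyi0 (by rw [h]; rfl)
  have hcoord : ∀ (b : ZMod 5) (i : Fin 6),
      vecInv (vecInv x + b • vecInv y) i = ((x i)^3 + b*(y i)^3)^3 := by
    intro b i
    show ((x i)⁻¹ + b * (y i)⁻¹)⁻¹ = _
    simp only [inv_eq_cube]
  have hsurj : ∀ u : ZMod 5, u ≠ 0 → ∃ i, i ≠ i₀ ∧ i ≠ j₀ ∧ y i = u * x i := by
    intro u hu
    obtain ⟨a, b, c, d, hab, hac, had, hbc, hbd, hcd,
      hai, haj, hbi, hbj, hci, hcj, hdi, hdj⟩ := f1 i₀ j₀ hij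
    have key := d6 (y a * (x a)^3) (y b * (x b)^3) (y c * (x c)^3) (y d * (x d)^3) u
      ⟨rat_ne _ _ _ _ (hxne a hai) (hxne b hbi) (hxy a b hab),
       rat_ne _ _ _ _ (hxne a hai) (hxne c hci) (hxy a c hac),
       rat_ne _ _ _ _ (hxne a hai) (hxne d hdi) (hxy a d had),
       rat_ne _ _ _ _ (hxne b hbi) (hxne c hci) (hxy b c hbc),
       rat_ne _ _ _ _ (hxne b hbi) (hxne d hdi) (hxy b d hbd),
       rat_ne _ _ _ _ (hxne c hci) (hxne d hdi) (hxy c d hcd),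
       mul_ne_zero (hyne a haj) (pow_ne_zero 3 (hxne a hai)),
       mul_ne_zero (hyne b hbj) (pow_ne_zero 3 (hxne b hbi)),
       mul_ne_zero (hyne c hcj) (pow_ne_zero 3 (hxne c hci)),
       mul_ne_zero (hyne d hdj) (pow_ne_zero 3 (hxne d hdi)), hu⟩
    rcases key with h|h|h|h
    · exact ⟨a, hai, haj, unrat _ _ _ (hxne a hai) h.symm⟩
    · exact ⟨b, hbi, hbj, unrat _ _ _ (hxne b hbi) h.symm⟩
    · exact ⟨c, hci, hcj, unrat _ _ _ (hxne c hci) h.symm⟩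
    · exact ⟨d, hdi, hdj, unrat _ _ _ (hxne d hdi) h.symm⟩
  have hker : ∀ b : ZMod 5, b ≠ 0 → ∃ k, k ≠ i₀ ∧ k ≠ j₀ ∧
      vecInv (vecInv x + b • vecInv y) k = 0 ∧
      (∀ i, vecInv (vecInv x + b • vecInv y) i = 0 → i = k) := by
    intro b hb
    obtain ⟨k, hk1, hk2, hk⟩ := hsurj (-b) (neg_ne_zero.mpr hb)
    refine ⟨k, hk1, hk2, ?_, ?_⟩
    · rw [hcoord]
      exact z5' (x k) (y k) b hb hk
    · intro i hi
      rw [hcoord] at hi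
      by_cases hii : i = i₀
      · rw [hii, hxi0] at hi
        exact absurd hi (z6 b (y i₀) hb hyi0)
      by_cases hjj : i = j₀
      · rw [hjj, hyj0] at hi
        exact absurd hi (z7 (x j₀) b hxj0)
      have h8 := z8 (x i) (y i) b (hxne i hii) (hyne i hjj) hb hi
      by_contra hik
      exact hxy i k hik (by rw [hk, h8]; ring)
  have hmain : ∀ b : ZMod 5, b ≠ 0 →
      IsSimplexPoint (span (ZMod 5) {vecInv (vecInv x + b • vecInv y)}) ∧
      PtCollinear (span (ZMod 5) {vecInv (vecInv x + b • vecInv y)})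
        (span (ZMod 5) {x}) ∧
      PtCollinear (span (ZMod 5) {vecInv (vecInv x + b • vecInv y)})
        (span (ZMod 5) {y}) ∧
      ¬ span (ZMod 5) {vecInv (vecInv x + b • vecInv y)} ≤ span (ZMod 5) {x, y} := by
    intro b hb
    obtain ⟨k, hk1, hk2, hk0, hku⟩ := hker b hb
    have hgpx : GoodPair (vecInv (vecInv x + b • vecInv y)) x := by
      intro i j hijne
      simp only [hcoord]
      exact gpwx (x i) (y i) (x j) (y j) b hb (hxy i j hijne)
    have hgpy : GoodPair (vecInv (vecInv x + b • vecInv y)) y := by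
      intro i j hijne
      simp only [hcoord]
      exact gpwy (x i) (y i) (x j) (y j) b hb (hxy i j hijne)
    refine ⟨⟨_, ⟨k, hk0, hku⟩, rfl⟩, ⟨_, x, hgpx, rfl, rfl⟩, ⟨_, y, hgpy, rfl, rfl⟩, ?_⟩
    intro hle
    have hmem : vecInv (vecInv x + b • vecInv y) ∈ span (ZMod 5) {x, y} :=
      hle (mem_span_singleton_self _)
    obtain ⟨α, β, hab⟩ := mem_span_pair.mp hmem
    have e0 := congrFun hab i₀
    simp only [Pi.add_apply, Pi.smul_apply, smul_eq_mul, hcoord] at e0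
    rw [hxi0] at e0
    have hβ : β = b^3 := z9 α β b (y i₀) hyi0 e0
    have e1' := congrFun hab j₀
    simp only [Pi.add_apply, Pi.smul_apply, smul_eq_mul, hcoord] at e1'
    rw [hyj0] at e1'
    have hα : α = 1 := z10 α β b (x j₀) hxj0 e1'
    obtain ⟨u, hu0, hune⟩ := d3' b hb
    obtain ⟨i, hi1, hi2, hiu⟩ := hsurj u hu0
    have e2' := congrFun hab i
    simp only [Pi.add_apply, Pi.smul_apply, smul_eq_mul, hcoord] at e2'
    rw [hα, hβ, hiu] at e2'
    exact hune (x i) (hxne i hi1) e2'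
  ext R
  simp only [Set.mem_diff, Set.mem_setOf_eq, Set.mem_insert_iff, Set.mem_singleton_iff]
  constructor
  · rintro ⟨⟨z, hz0, hzm, rfl⟩, hRn⟩
    push_neg at hRn
    obtain ⟨hR1, hR2⟩ := hRn
    obtain ⟨a, c, hac⟩ := mem_span_pair.mp hzm
    by_cases hc : c = 0
    · exfalso
      rw [hc, zero_smul, add_zero] at hac
      have ha : a ≠ 0 := by rintro rfl; rw [zero_smul] at hac; exact hz0 hac.symm
      apply hR1
      have hvz : vecInv z = a^3 • x := by
        funext i
        rw [← hac]
        show (a * (x i)⁻¹)⁻¹ = a^3 * x i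
        simp only [inv_eq_cube]
        exact z12' a (x i)
      rw [hvz]
      exact span_singleton_smul_eq (pow_ne_zero 3 ha).isUnit x
    by_cases ha : a = 0
    · exfalso
      rw [ha, zero_smul, zero_add] at hac
      apply hR2
      have hvz : vecInv z = c^3 • y := by
        funext i
        rw [← hac]
        show (c * (y i)⁻¹)⁻¹ = c^3 * y i
        simp only [inv_eq_cube]
        exact z12' c (y i)
      rw [hvz]
      exact span_singleton_smul_eq (pow_ne_zero 3 hc).isUnit y
    have hz2 : z = a • (vecInv x + (a^3*c) • vecInv y) := by
      funext i
      rw [← hac]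
      show a * (x i)⁻¹ + c * (y i)⁻¹ = a * ((x i)⁻¹ + a^3*c*(y i)⁻¹)
      exact z13 a c _ _ ha
    have hvz : vecInv z = a^3 • vecInv (vecInv x + (a^3*c) • vecInv y) := by
      funext i
      rw [hz2]
      show (a * ((vecInv x + (a^3*c) • vecInv y) i))⁻¹
        = a^3 * ((vecInv x + (a^3*c) • vecInv y) i)⁻¹
      simp only [inv_eq_cube]
      exact mul_pow a _ 3
    have hbne : a^3*c ≠ 0 := mul_ne_zero (pow_ne_zero 3 ha) hc
    obtain ⟨hsp, hcl1, hcl2, hcl3⟩ := hmain (a^3*c) hbne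
    have hspan : span (ZMod 5) {vecInv z}
        = span (ZMod 5) {vecInv (vecInv x + (a^3*c) • vecInv y)} := by
      rw [hvz]
      exact span_singleton_smul_eq (pow_ne_zero 3 ha).isUnit _
    rw [hspan]
    exact ⟨hsp, hcl1, hcl2, hcl3⟩
  · rintro ⟨⟨w, ⟨k, hwk, hwku⟩, rfl⟩, hcx, hcy, hnle⟩
    have hwn0 : w ≠ 0 := by
      obtain ⟨j, hj⟩ := exists_ne k
      exact fun h => hj (hwku j (by rw [h]; rfl))
    have hgwx : GoodPair w x := by
      obtain ⟨u, v, hguv, hRu, hxv⟩ := hcx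
      obtain ⟨d, hd, hud⟩ := (span_eq_iff hwn0).mp hRu.symm
      obtain ⟨cc, hcc, hvc⟩ := (span_eq_iff hxn0).mp hxv.symm
      rw [hud, hvc] at hguv
      exact gp_unsmul hd hcc hguv
    have hgwy : GoodPair w y := by
      obtain ⟨u, v, hguv, hRu, hyv⟩ := hcy
      obtain ⟨d, hd, hud⟩ := (span_eq_iff hwn0).mp hRu.symm
      obtain ⟨cc, hcc, hvc⟩ := (span_eq_iff hyn0).mp hyv.symm
      rw [hud, hvc] at hguv
      exact gp_unsmul hd hcc hguv
    have hki0 : k ≠ i₀ := by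
      intro h
      obtain ⟨j, hj⟩ := exists_ne k
      exact hgwx k j (Ne.symm hj) (by rw [hwk, h, hxi0]; ring)
    have hkj0 : k ≠ j₀ := by
      intro h
      obtain ⟨j, hj⟩ := exists_ne k
      exact hgwy k j (Ne.symm hj) (by rw [hwk, h, hyj0]; ring)
    have hxk : x k ≠ 0 := hxne k hki0
    have hyk : y k ≠ 0 := hyne k hkj0
    have hwj0 : w j₀ ≠ 0 := fun h => hkj0 (hwku j₀ h).symm
    have hwi0 : w i₀ ≠ 0 := fun h => hki0 (hwku i₀ h).symm
    have hP0 : w j₀ * (x j₀)^3 ≠ 0 := mul_ne_zero hwj0 (pow_ne_zero 3 hxj0)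
    have hM0 : y k * (x k)^3 ≠ 0 := mul_ne_zero hyk (pow_ne_zero 3 hxk)
    obtain ⟨i1, i2, i3, h12, h13, h23, h1i, h1j, h1k, h2i, h2j, h2k, h3i, h3j, h3k⟩ :=
      f2 i₀ j₀ k ⟨hij, hki0, hkj0⟩
    have hcov := cover h12 h13 h23 h1i h1j h1k h2i h2j h2k h3i h3j h3k hij hki0 hkj0
    have hx1 : x i1 ≠ 0 := hxne i1 h1i
    have hx2 : x i2 ≠ 0 := hxne i2 h2i
    have hx3 : x i3 ≠ 0 := hxne i3 h3i
    have hy1 : y i1 ≠ 0 := hyne i1 h1j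
    have hy2 : y i2 ≠ 0 := hyne i2 h2j
    have hy3 : y i3 ≠ 0 := hyne i3 h3j
    have hw1 : w i1 ≠ 0 := fun h => h1k (hwku i1 h)
    have hw2 : w i2 ≠ 0 := fun h => h2k (hwku i2 h)
    have hw3 : w i3 ≠ 0 := fun h => h3k (hwku i3 h)
    have hyk_eq : y k = (y k*(x k)^3) * x k := unrat (y k) (x k) _ hxk rfl
    have hgxw := gp_symm hgwx
    have hgyw := gp_symm hgwy
    have hCne : (w j₀*(x j₀)^3)^3 * (y k*(x k)^3)^9 ≠ 0 :=
      mul_ne_zero (pow_ne_zero 3 hP0) (pow_ne_zero 9 hM0)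
    have hs12 : w i1*(x i1)^3*(w j₀*(x j₀)^3)^3 * (y i1*(x i1)^3*(y k*(x k)^3)^3)^3
        ≠ w i2*(x i2)^3*(w j₀*(x j₀)^3)^3 * (y i2*(x i2)^3*(y k*(x k)^3)^3)^3 := by
      rw [e6 (w i1) (y i1) (x i1) (w j₀*(x j₀)^3) (y k*(x k)^3) hx1,
          e6 (w i2) (y i2) (x i2) (w j₀*(x j₀)^3) (y k*(x k)^3) hx2]
      exact fun h => rat_ne (y i1) (w i1) (y i2) (w i2) hy1 hy2 (hgyw i1 i2 h12)
        (mul_right_cancel₀ hCne h)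
    have hs13 : w i1*(x i1)^3*(w j₀*(x j₀)^3)^3 * (y i1*(x i1)^3*(y k*(x k)^3)^3)^3
        ≠ w i3*(x i3)^3*(w j₀*(x j₀)^3)^3 * (y i3*(x i3)^3*(y k*(x k)^3)^3)^3 := by
      rw [e6 (w i1) (y i1) (x i1) (w j₀*(x j₀)^3) (y k*(x k)^3) hx1,
          e6 (w i3) (y i3) (x i3) (w j₀*(x j₀)^3) (y k*(x k)^3) hx3]
      exact fun h => rat_ne (y i1) (w i1) (y i3) (w i3) hy1 hy3 (hgyw i1 i3 h13)
        (mul_right_cancel₀ hCne h)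
    have hs23 : w i2*(x i2)^3*(w j₀*(x j₀)^3)^3 * (y i2*(x i2)^3*(y k*(x k)^3)^3)^3
        ≠ w i3*(x i3)^3*(w j₀*(x j₀)^3)^3 * (y i3*(x i3)^3*(y k*(x k)^3)^3)^3 := by
      rw [e6 (w i2) (y i2) (x i2) (w j₀*(x j₀)^3) (y k*(x k)^3) hx2,
          e6 (w i3) (y i3) (x i3) (w j₀*(x j₀)^3) (y k*(x k)^3) hx3]
      exact fun h => rat_ne (y i2) (w i2) (y i3) (w i3) hy2 hy3 (hgyw i2 i3 h23)
        (mul_right_cancel₀ hCne h)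
    have hnaf : ¬(w i1*(x i1)^3*(w j₀*(x j₀)^3)^3 = 1 - y i1*(x i1)^3*(y k*(x k)^3)^3 ∧
        w i2*(x i2)^3*(w j₀*(x j₀)^3)^3 = 1 - y i2*(x i2)^3*(y k*(x k)^3)^3 ∧
        w i3*(x i3)^3*(w j₀*(x j₀)^3)^3 = 1 - y i3*(x i3)^3*(y k*(x k)^3)^3) := by
      rintro ⟨ha1, ha2, ha3⟩
      apply hnle
      rw [span_le, Set.singleton_subset_iff]
      have hσ : w i₀ * (y i₀)^3 = -((w j₀*(x j₀)^3) * (y k*(x k)^3)^3) := by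
        refine d4 _ _ 0 (w i1*(y i1)^3) (w i2*(y i2)^3) (w i3*(y i3)^3)
          ⟨(mul_ne_zero hw1 (pow_ne_zero 3 hy1)).symm,
           (mul_ne_zero hw2 (pow_ne_zero 3 hy2)).symm,
           (mul_ne_zero hw3 (pow_ne_zero 3 hy3)).symm,
           rat_ne (y i1) (w i1) (y i2) (w i2) hy1 hy2 (hgyw i1 i2 h12),
           rat_ne (y i1) (w i1) (y i3) (w i3) hy1 hy3 (hgyw i1 i3 h13),
           rat_ne (y i2) (w i2) (y i3) (w i3) hy2 hy3 (hgyw i2 i3 h23),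
           mul_ne_zero hwi0 (pow_ne_zero 3 hyi0),
           rat_ne (y i₀) (w i₀) (y i1) (w i1) hyi0 hy1 (hgyw i₀ i1 (Ne.symm h1i)),
           rat_ne (y i₀) (w i₀) (y i2) (w i2) hyi0 hy2 (hgyw i₀ i2 (Ne.symm h2i)),
           rat_ne (y i₀) (w i₀) (y i3) (w i3) hyi0 hy3 (hgyw i₀ i3 (Ne.symm h3i)),
           neg_ne_zero.mpr (mul_ne_zero hP0 (pow_ne_zero 3 hM0)),
           e7 (w i1) (x i1) (y i1) (w j₀*(x j₀)^3) (y k*(x k)^3) hx1 hy1 hP0 hM0 hw1 ha1,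
           e7 (w i2) (x i2) (y i2) (w j₀*(x j₀)^3) (y k*(x k)^3) hx2 hy2 hP0 hM0 hw2 ha2,
           e7 (w i3) (x i3) (y i3) (w j₀*(x j₀)^3) (y k*(x k)^3) hx3 hy3 hP0 hM0 hw3 ha3⟩
      have hwi0eq : w i₀ = (-((w j₀*(x j₀)^3) * (y k*(x k)^3)^3)) * y i₀ :=
        unrat (w i₀) (y i₀) _ hyi0 hσ
      refine mem_span_pair.mpr
        ⟨w j₀*(x j₀)^3, -((w j₀*(x j₀)^3) * (y k*(x k)^3)^3), funext fun i => ?_⟩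
      simp only [Pi.add_apply, Pi.smul_apply, smul_eq_mul]
      rcases hcov i with h|h|h|h|h|h
      · rw [h, hxi0, hwi0eq]; ring
      · rw [h, hyj0]
        linear_combination -(unrat (w j₀) (x j₀) _ hxj0 rfl)
      · rw [h]
        linear_combination (e9 (w j₀*(x j₀)^3) (y k*(x k)^3) (x k) hM0)
          + (-((w j₀*(x j₀)^3) * (y k*(x k)^3)^3)) * hyk_eq - hwk
      · rw [h]
        linear_combination (e10 (w j₀*(x j₀)^3) (y k*(x k)^3) (y i1*(x i1)^3)
            (w i1*(x i1)^3) (x i1) hP0 hM0 hx1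
            (mul_ne_zero hy1 (pow_ne_zero 3 hx1)) ha1)
          + (-((w j₀*(x j₀)^3) * (y k*(x k)^3)^3)) * (unrat (y i1) (x i1) _ hx1 rfl)
          - (unrat (w i1) (x i1) _ hx1 rfl)
      · rw [h]
        linear_combination (e10 (w j₀*(x j₀)^3) (y k*(x k)^3) (y i2*(x i2)^3)
            (w i2*(x i2)^3) (x i2) hP0 hM0 hx2
            (mul_ne_zero hy2 (pow_ne_zero 3 hx2)) ha2)
          + (-((w j₀*(x j₀)^3) * (y k*(x k)^3)^3)) * (unrat (y i2) (x i2) _ hx2 rfl)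
          - (unrat (w i2) (x i2) _ hx2 rfl)
      · rw [h]
        linear_combination (e10 (w j₀*(x j₀)^3) (y k*(x k)^3) (y i3*(x i3)^3)
            (w i3*(x i3)^3) (x i3) hP0 hM0 hx3
            (mul_ne_zero hy3 (pow_ne_zero 3 hx3)) ha3)
          + (-((w j₀*(x j₀)^3) * (y k*(x k)^3)^3)) * (unrat (y i3) (x i3) _ hx3 rfl)
          - (unrat (w i3) (x i3) _ hx3 rfl)
    obtain ⟨hk1', hk2', hk3'⟩ := key1_s12
      (y i1*(x i1)^3*(y k*(x k)^3)^3) (y i2*(x i2)^3*(y k*(x k)^3)^3)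
      (y i3*(x i3)^3*(y k*(x k)^3)^3)
      (w i1*(x i1)^3*(w j₀*(x j₀)^3)^3) (w i2*(x i2)^3*(w j₀*(x j₀)^3)^3)
      (w i3*(x i3)^3*(w j₀*(x j₀)^3)^3)
      ⟨mul_ne_zero (mul_ne_zero hy1 (pow_ne_zero 3 hx1)) (pow_ne_zero 3 hM0),
       mul_ne_zero (mul_ne_zero hy2 (pow_ne_zero 3 hx2)) (pow_ne_zero 3 hM0),
       mul_ne_zero (mul_ne_zero hy3 (pow_ne_zero 3 hx3)) (pow_ne_zero 3 hM0),
       e1 (y i1) (x i1) (y k) (x k) hx1 hxk (hxy i1 k h1k),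
       e1 (y i2) (x i2) (y k) (x k) hx2 hxk (hxy i2 k h2k),
       e1 (y i3) (x i3) (y k) (x k) hx3 hxk (hxy i3 k h3k),
       e2 (y i1) (x i1) (y i2) (x i2) (y k*(x k)^3) hx1 hx2 hM0 (hxy i1 i2 h12),
       e2 (y i1) (x i1) (y i3) (x i3) (y k*(x k)^3) hx1 hx3 hM0 (hxy i1 i3 h13),
       e2 (y i2) (x i2) (y i3) (x i3) (y k*(x k)^3) hx2 hx3 hM0 (hxy i2 i3 h23),
       mul_ne_zero (mul_ne_zero hw1 (pow_ne_zero 3 hx1)) (pow_ne_zero 3 hP0),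
       mul_ne_zero (mul_ne_zero hw2 (pow_ne_zero 3 hx2)) (pow_ne_zero 3 hP0),
       mul_ne_zero (mul_ne_zero hw3 (pow_ne_zero 3 hx3)) (pow_ne_zero 3 hP0),
       e1 (w i1) (x i1) (w j₀) (x j₀) hx1 hxj0 (hgxw i1 j₀ h1j),
       e1 (w i2) (x i2) (w j₀) (x j₀) hx2 hxj0 (hgxw i2 j₀ h2j),
       e1 (w i3) (x i3) (w j₀) (x j₀) hx3 hxj0 (hgxw i3 j₀ h3j),
       e2 (w i1) (x i1) (w i2) (x i2) (w j₀*(x j₀)^3) hx1 hx2 hP0 (hgxw i1 i2 h12),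
       e2 (w i1) (x i1) (w i3) (x i3) (w j₀*(x j₀)^3) hx1 hx3 hP0 (hgxw i1 i3 h13),
       e2 (w i2) (x i2) (w i3) (x i3) (w j₀*(x j₀)^3) hx2 hx3 hP0 (hgxw i2 i3 h23),
       hs12, hs13, hs23, hnaf⟩
    have hσ2 : w i₀ * (y i₀)^3 = -((w j₀*(x j₀)^3) * (y k*(x k)^3)^3) := by
      refine d4 _ _ 0 (w i1*(y i1)^3) (w i2*(y i2)^3) (w i3*(y i3)^3)
        ⟨(mul_ne_zero hw1 (pow_ne_zero 3 hy1)).symm,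
         (mul_ne_zero hw2 (pow_ne_zero 3 hy2)).symm,
         (mul_ne_zero hw3 (pow_ne_zero 3 hy3)).symm,
         rat_ne (y i1) (w i1) (y i2) (w i2) hy1 hy2 (hgyw i1 i2 h12),
         rat_ne (y i1) (w i1) (y i3) (w i3) hy1 hy3 (hgyw i1 i3 h13),
         rat_ne (y i2) (w i2) (y i3) (w i3) hy2 hy3 (hgyw i2 i3 h23),
         mul_ne_zero hwi0 (pow_ne_zero 3 hyi0),
         rat_ne (y i₀) (w i₀) (y i1) (w i1) hyi0 hy1 (hgyw i₀ i1 (Ne.symm h1i)),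
         rat_ne (y i₀) (w i₀) (y i2) (w i2) hyi0 hy2 (hgyw i₀ i2 (Ne.symm h2i)),
         rat_ne (y i₀) (w i₀) (y i3) (w i3) hyi0 hy3 (hgyw i₀ i3 (Ne.symm h3i)),
         neg_ne_zero.mpr (mul_ne_zero hP0 (pow_ne_zero 3 hM0)),
         e11 (w i1) (x i1) (y i1) (w j₀*(x j₀)^3) (y k*(x k)^3) hx1 hy1 hP0 hM0 hw1 hk1',
         e11 (w i2) (x i2) (y i2) (w j₀*(x j₀)^3) (y k*(x k)^3) hx2 hy2 hP0 hM0 hw2 hk2',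
         e11 (w i3) (x i3) (y i3) (w j₀*(x j₀)^3) (y k*(x k)^3) hx3 hy3 hP0 hM0 hw3 hk3'⟩
    have hweq : w = (w j₀*(x j₀)^3) •
        vecInv (vecInv x + (-(y k*(x k)^3)) • vecInv y) := by
      funext i
      simp only [Pi.smul_apply, smul_eq_mul, hcoord]
      rcases hcov i with h|h|h|h|h|h
      · rw [h, hxi0, e12 (w j₀*(x j₀)^3) (y k*(x k)^3) (y i₀)]
        exact unrat (w i₀) (y i₀) _ hyi0 hσ2
      · rw [h, hyj0, e13 (x j₀) (-(y k*(x k)^3))]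
        exact unrat (w j₀) (x j₀) _ hxj0 rfl
      · rw [h, hwk]
        exact (e14' (x k) (y k) (y k*(x k)^3) (w j₀*(x j₀)^3) hM0 hyk_eq).symm
      · rw [h]
        exact e15' (w i1) (x i1) (y i1) (w j₀*(x j₀)^3) (y k*(x k)^3) hx1 hy1 hP0 hM0 hk1'
      · rw [h]
        exact e15' (w i2) (x i2) (y i2) (w j₀*(x j₀)^3) (y k*(x k)^3) hx2 hy2 hP0 hM0 hk2'
      · rw [h]
        exact e15' (w i3) (x i3) (y i3) (w j₀*(x j₀)^3) (y k*(x k)^3) hx3 hy3 hP0 hM0 hk3'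
    have hzn0 : (vecInv x + (-(y k*(x k)^3)) • vecInv y) ≠ 0 := by
      intro h0
      have h1 := congrFun h0 i₀
      simp only [Pi.add_apply, Pi.smul_apply, smul_eq_mul, vecInv_apply,
        inv_eq_cube, Pi.zero_apply] at h1
      rw [hxi0] at h1
      exact e16 (y k*(x k)^3) (y i₀) hM0 hyi0 h1
    refine ⟨⟨vecInv x + (-(y k*(x k)^3)) • vecInv y, hzn0,
      mem_span_pair.mpr ⟨1, -(y k*(x k)^3), by rw [one_smul]⟩, ?_⟩, ?_⟩
    · rw [hweq]
      exact span_singleton_smul_eq hP0.isUnit _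
    · rintro (h|h)
      · obtain ⟨cc, hcc, hwc⟩ := (span_eq_iff hxn0).mp h
        have hck := congrFun hwc k
        simp only [Pi.smul_apply, smul_eq_mul] at hck
        rw [hwk] at hck
        exact mul_ne_zero hcc hxk hck.symm
      · obtain ⟨cc, hcc, hwc⟩ := (span_eq_iff hyn0).mp h
        have hck := congrFun hwc k
        simp only [Pi.smul_apply, smul_eq_mul] at hck
        rw [hwk] at hck
        exact mul_ne_zero hcc hyk hck.symm
end
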